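/- arXiv:2010.03050 — 7 statements merged into one kernel-verified Lean document; each statement's English description precedes it below -/
import Mathlib

section
/- Suppose in the mixed HK model that all pairs of opinions at time t are within distance ε (so every agent is a neighbor of every other). Then max_{i,j} ‖xᵢ(t+1) - xⱼ(t+1)‖ ≤ β_t · max_{i,j} ‖xᵢ(t) - xⱼ(t)‖, where β_t = max_{i,j : αᵢ(t) ≥ αⱼ(t)} ( αᵢ(t) - (αᵢ(t) - αⱼ(t))/n ). -/
/-!
When every agent sees every other one, agent `i` moves towards the global mean `m`, and
`xᵢ' - xⱼ' = αⱼ (xᵢ - xⱼ) + (αᵢ - αⱼ) (xᵢ - m)`. If `αⱼ ≤ αᵢ` both coefficients are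
nonnegative, and `‖xᵢ - m‖ ≤ (n - 1)/n · D` because the `i`-th summand of `n (xᵢ - m)`
vanishes, where `D` bounds all pairwise distances; this gives `‖xᵢ' - xⱼ'‖ ≤ (αᵢ - (αᵢ - αⱼ)/n) · D`.
-/

open Finset

section StubbornMeanUpdate

variable {ι E : Type*} [Fintype ι] [NormedAddCommGroup E] [NormedSpace ℝ E]

noncomputable def stubbornMeanUpdate (a : ι → ℝ) (x : ι → E) (i : ι) : E :=
  a i • x i + ((1 - a i) / Fintype.card ι) • ∑ k, x k

lemma norm_card_smul_sub_sum_le {x : ι → E} {D : ℝ} (i : ι) (hD : ∀ k, ‖x i - x k‖ ≤ D) :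
    ‖(Fintype.card ι : ℝ) • x i - ∑ k, x k‖ ≤ (Fintype.card ι - 1) * D := by
  classical
  have hsum : (Fintype.card ι : ℝ) • x i - ∑ k, x k = ∑ k ∈ univ.erase i, (x i - x k) := by
    rw [sum_erase (f := fun k => x i - x k) _ (sub_self _), sum_sub_distrib, sum_const, card_univ, Nat.cast_smul_eq_nsmul]
  calc ‖(Fintype.card ι : ℝ) • x i - ∑ k, x k‖
      ≤ ∑ k ∈ univ.erase i, ‖x i - x k‖ := hsum ▸ norm_sum_le _ _
    _ ≤ #(univ.erase i) • D := sum_le_card_nsmul _ _ _ fun k _ => hD k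
    _ = (Fintype.card ι - 1) * D := by
      rw [card_erase_of_mem (mem_univ i), card_univ, nsmul_eq_mul,
        Nat.cast_pred (Fintype.card_pos_iff.mpr ⟨i⟩)]

lemma stubbornMeanUpdate_sub (a : ι → ℝ) (x : ι → E) (i j : ι) :
    stubbornMeanUpdate a x i - stubbornMeanUpdate a x j
      = a j • (x i - x j)
        + ((a i - a j) / Fintype.card ι) • ((Fintype.card ι : ℝ) • x i - ∑ k, x k) := by
  have : Nonempty ι := ⟨i⟩
  have : (Fintype.card ι : ℝ) ≠ 0 := Nat.cast_ne_zero.mpr Fintype.card_ne_zero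
  unfold stubbornMeanUpdate
  match_scalars <;> field_simp <;> ring

lemma norm_stubbornMeanUpdate_sub_le {a : ι → ℝ} {x : ι → E} {D : ℝ}
    (hD : ∀ i j, ‖x i - x j‖ ≤ D) {i j : ι} (hj : 0 ≤ a j) (hji : a j ≤ a i) :
    ‖stubbornMeanUpdate a x i - stubbornMeanUpdate a x j‖
      ≤ (a i - (a i - a j) / Fintype.card ι) * D := by
  have : Nonempty ι := ⟨i⟩
  have hcard : (Fintype.card ι : ℝ) ≠ 0 := Nat.cast_ne_zero.mpr Fintype.card_ne_zero
  have hcoef : 0 ≤ (a i - a j) / Fintype.card ι := div_nonneg (sub_nonneg.mpr hji) (by positivity)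
  calc ‖stubbornMeanUpdate a x i - stubbornMeanUpdate a x j‖
      ≤ a j * ‖x i - x j‖
        + (a i - a j) / Fintype.card ι * ‖(Fintype.card ι : ℝ) • x i - ∑ k, x k‖ := by
        rw [stubbornMeanUpdate_sub]
        refine (norm_add_le _ _).trans_eq ?_
        rw [norm_smul, norm_smul, Real.norm_of_nonneg hj, Real.norm_of_nonneg hcoef]
    _ ≤ a j * D + (a i - a j) / Fintype.card ι * ((Fintype.card ι - 1) * D) := by
        gcongr
        exacts [hD i j, norm_card_smul_sub_sum_le i (hD i)]
    _ = (a i - (a i - a j) / Fintype.card ι) * D := by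
        field_simp
        ring

end StubbornMeanUpdate

theorem mixedHK_contraction_of_eps_trivial_general (n d : ℕ) (ε : ℝ)
    (x : ℕ → Fin n → EuclideanSpace ℝ (Fin d))
    (α : ℕ → Fin n → ℝ) (hα : ∀ t i, α t i ∈ Set.Icc (0 : ℝ) 1)
    (N : ℕ → Fin n → Finset (Fin n))
    (hN : ∀ t i, N t i = Finset.univ.filter (fun j => ‖x t i - x t j‖ ≤ ε))
    (hupd : ∀ t i, x (t + 1) i
      = α t i • x t i + ((1 - α t i) / ((N t i).card : ℝ)) • ∑ j ∈ N t i, x t j)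
    (t : ℕ) (htriv : ∀ i j, ‖x t i - x t j‖ ≤ ε) :
    (⨆ i : Fin n, ⨆ j : Fin n, ‖x (t + 1) i - x (t + 1) j‖)
      ≤ (⨆ i : Fin n, ⨆ j : Fin n, ⨆ _ : α t j ≤ α t i,
            (α t i - (α t i - α t j) / (n : ℝ)))
        * (⨆ i : Fin n, ⨆ j : Fin n, ‖x t i - x t j‖) := by
  have hstep : x (t + 1) = stubbornMeanUpdate (α t) (x t) := by
    funext i
    have hNi : N t i = univ := by rw [hN]; exact filter_true_of_mem fun j _ => htriv i j
    rw [hupd, hNi, card_univ, stubbornMeanUpdate]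
  rcases isEmpty_or_nonempty (Fin n) with _ | _
  · simp
  set β := ⨆ i : Fin n, ⨆ j : Fin n, ⨆ _ : α t j ≤ α t i, (α t i - (α t i - α t j) / (n : ℝ))
  set D := ⨆ i : Fin n, ⨆ j : Fin n, ‖x t i - x t j‖
  have hD : ∀ i j, ‖x t i - x t j‖ ≤ D := fun i j =>
    le_ciSup_of_le (Finite.bddAbove_range _) i <|
      le_ciSup (f := fun j => ‖x t i - x t j‖) (Finite.bddAbove_range _) j
  have hβ : ∀ i j, α t j ≤ α t i → α t i - (α t i - α t j) / n ≤ β := fun i j hji =>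
    le_ciSup_of_le (Finite.bddAbove_range _) i <| le_ciSup_of_le (Finite.bddAbove_range _) j <|
      le_ciSup (f := fun _ : α t j ≤ α t i => α t i - (α t i - α t j) / n)
        (Finite.bddAbove_range _) hji
  have hpair : ∀ i j, α t j ≤ α t i → ‖x (t + 1) i - x (t + 1) j‖ ≤ β * D := fun i j hji => by
    rw [hstep]
    refine (norm_stubbornMeanUpdate_sub_le hD (hα t j).1 hji).trans ?_
    rw [Fintype.card_fin]
    exact mul_le_mul_of_nonneg_right (hβ i j hji) ((norm_nonneg _).trans (hD i i))
  refine ciSup_le fun i => ciSup_le fun j => ?_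
  rcases le_total (α t j) (α t i) with h | h
  · exact hpair i j h
  · rw [norm_sub_rev]
    exact hpair j i h

/-- Lemma 4: if the configuration at time `t` is ε-trivial (all agents are
mutual neighbors), then the maximal pairwise distance contracts by the factor
`β t = max_{αᵢ ≥ αⱼ} (αᵢ - (αᵢ - αⱼ)/n)`. -/
theorem mixedHK_contraction_of_eps_trivial (n d : ℕ) (ε : ℝ) (hε : 0 < ε)
    (x : ℕ → Fin n → EuclideanSpace ℝ (Fin d))
    (α : ℕ → Fin n → ℝ) (hα : ∀ t i, α t i ∈ Set.Icc (0 : ℝ) 1)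
    (N : ℕ → Fin n → Finset (Fin n))
    (hN : ∀ t i, N t i = Finset.univ.filter (fun j => ‖x t i - x t j‖ ≤ ε))
    (hupd : ∀ t i, x (t + 1) i
      = α t i • x t i + ((1 - α t i) / ((N t i).card : ℝ)) • ∑ j ∈ N t i, x t j)
    (t : ℕ) (htriv : ∀ i j, ‖x t i - x t j‖ ≤ ε) :
    (⨆ i : Fin n, ⨆ j : Fin n, ‖x (t + 1) i - x (t + 1) j‖)
      ≤ (⨆ i : Fin n, ⨆ j : Fin n, ⨆ _ : α t j ≤ α t i,
            (α t i - (α t i - α t j) / (n : ℝ)))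
        * (⨆ i : Fin n, ⨆ j : Fin n, ‖x t i - x t j‖) :=
  mixedHK_contraction_of_eps_trivial_general n d ε x α hα N hN hupd t htriv
end

section
/- In the ε-trivial mixed HK model (all agents are mutual neighbors at some time t and hence at all later times), if limsup_{t→∞} β_t < 1, where β_t = max_{i,j : αᵢ(t) ≥ αⱼ(t)} ( αᵢ(t) - (αᵢ(t) - αⱼ(t))/n ), then max_{i,j} ‖xᵢ(t) - xⱼ(t)‖ → 0 as t → ∞, i.e., a consensus is reached asymptotically. -/
/-!
Once the configuration is `ε`-trivial every agent sees every other agent, so each step is the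
map `xᵢ ↦ αᵢ xᵢ + (1 - αᵢ) · mean(x)`, and all later configurations stay `ε`-trivial.
For `αⱼ ≤ αᵢ` the difference of two updated opinions is
`αⱼ (xᵢ - xⱼ) + ((αᵢ - αⱼ) / n) ∑ₖ (xᵢ - xₖ)`, whose norm is at most
`(αⱼ + (αᵢ - αⱼ)(n - 1)/n) D = (αᵢ - (αᵢ - αⱼ)/n) D` for the spread `D`.
Hence the spread contracts by `β t`, and eventually by a fixed factor `< 1`.
-/

open Filter Topology

namespace MixedHK

variable {ι : Type*}

/-- The coefficient `β t` of the paper, for weights `a = α t`. -/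
noncomputable def contractionCoeff [Fintype ι] (a : ι → ℝ) : ℝ :=
  ⨆ i, ⨆ j, ⨆ _ : a j ≤ a i, (a i - (a i - a j) / Fintype.card ι)

theorem le_contractionCoeff [Fintype ι] {a : ι → ℝ} {i j : ι} (hji : a j ≤ a i) :
    a i - (a i - a j) / Fintype.card ι ≤ contractionCoeff a := by
  refine le_trans ?_ (le_ciSup (Finite.bddAbove_range _) i)
  refine le_trans ?_ (le_ciSup (Finite.bddAbove_range
    (fun j => ⨆ _ : a j ≤ a i, (a i - (a i - a j) / Fintype.card ι))) j)
  exact (ciSup_pos (f := fun _ => a i - (a i - a j) / Fintype.card ι) hji).ge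

theorem contractionCoeff_le_one [Fintype ι] {a : ι → ℝ} (ha : ∀ i, a i ∈ Set.Icc (0 : ℝ) 1) :
    contractionCoeff a ≤ 1 := by
  refine Real.iSup_le (fun i => Real.iSup_le (fun j => Real.iSup_le (fun hji => ?_)
    zero_le_one) zero_le_one) zero_le_one
  have : 0 ≤ (a i - a j) / Fintype.card ι := div_nonneg (sub_nonneg.mpr hji) (Nat.cast_nonneg _)
  linarith [(ha i).2]

variable {E : Type*} [SeminormedAddCommGroup E]

noncomputable def spread (x : ι → E) : ℝ := ⨆ i, ⨆ j, ‖x i - x j‖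

theorem spread_nonneg (x : ι → E) : 0 ≤ spread x :=
  Real.iSup_nonneg fun _ => Real.iSup_nonneg fun _ => norm_nonneg _

theorem spread_le [Nonempty ι] {x : ι → E} {c : ℝ} (h : ∀ i j, ‖x i - x j‖ ≤ c) :
    spread x ≤ c :=
  ciSup_le fun i => ciSup_le fun j => h i j

theorem norm_sub_le_spread [Finite ι] (x : ι → E) (i j : ι) : ‖x i - x j‖ ≤ spread x :=
  (le_ciSup (f := fun j => ‖x i - x j‖) (Finite.bddAbove_range _) j).trans
    (le_ciSup (f := fun i => ⨆ j, ‖x i - x j‖) (Finite.bddAbove_range _) i)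

variable [Fintype ι]

theorem norm_sum_sub_le_spread (x : ι → E) (i : ι) :
    ‖∑ k, (x i - x k)‖ ≤ ((Fintype.card ι : ℝ) - 1) * spread x := by
  classical
  have : Nonempty ι := ⟨i⟩
  calc ‖∑ k, (x i - x k)‖ ≤ ∑ k, ‖x i - x k‖ := norm_sum_le _ _
    _ = ∑ k ∈ Finset.univ.erase i, ‖x i - x k‖ := by
      rw [← Finset.add_sum_erase _ _ (Finset.mem_univ i), sub_self, norm_zero, zero_add]
    _ ≤ (Finset.univ.erase i).card • spread x :=
      Finset.sum_le_card_nsmul _ _ _ fun k _ => norm_sub_le_spread x i k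
    _ = ((Fintype.card ι : ℝ) - 1) * spread x := by
      rw [Finset.card_erase_of_mem (Finset.mem_univ i), Finset.card_univ, nsmul_eq_mul,
        Nat.cast_sub Fintype.card_pos, Nat.cast_one]

variable [NormedSpace ℝ E]

/-- The update of the model when all agents are mutual neighbours. -/
noncomputable def step (a : ι → ℝ) (x : ι → E) (i : ι) : E :=
  a i • x i + ((1 - a i) / Fintype.card ι) • ∑ k, x k

theorem step_sub_step_eq (a : ι → ℝ) (x : ι → E) (i j : ι) :
    step a x i - step a x j
      = a j • (x i - x j) + ((a i - a j) / Fintype.card ι) • ∑ k, (x i - x k) := by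
  have : Nonempty ι := ⟨i⟩
  have hn : (Fintype.card ι : ℝ) ≠ 0 := Nat.cast_ne_zero.mpr Fintype.card_ne_zero
  rw [step, step, Finset.sum_sub_distrib, Finset.sum_const, Finset.card_univ,
    ← Nat.cast_smul_eq_nsmul ℝ]
  match_scalars <;> field_simp <;> ring

theorem norm_step_sub_step_le {a : ι → ℝ} (ha : ∀ i, a i ∈ Set.Icc (0 : ℝ) 1) (x : ι → E)
    {i j : ι} (hji : a j ≤ a i) :
    ‖step a x i - step a x j‖ ≤ (a i - (a i - a j) / Fintype.card ι) * spread x := by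
  have : Nonempty ι := ⟨i⟩
  have hn : (Fintype.card ι : ℝ) ≠ 0 := Nat.cast_ne_zero.mpr Fintype.card_ne_zero
  have hdiff : 0 ≤ (a i - a j) / Fintype.card ι :=
    div_nonneg (sub_nonneg.mpr hji) (Nat.cast_nonneg _)
  rw [step_sub_step_eq]
  calc ‖a j • (x i - x j) + ((a i - a j) / Fintype.card ι) • ∑ k, (x i - x k)‖
      ≤ a j * spread x + (a i - a j) / Fintype.card ι * ((Fintype.card ι - 1) * spread x) := by
        refine (norm_add_le _ _).trans (add_le_add ?_ ?_)
        · rw [norm_smul, Real.norm_of_nonneg (ha j).1]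
          exact mul_le_mul_of_nonneg_left (norm_sub_le_spread x i j) (ha j).1
        · rw [norm_smul, Real.norm_of_nonneg hdiff]
          exact mul_le_mul_of_nonneg_left (norm_sum_sub_le_spread x i) hdiff
    _ = (a i - (a i - a j) / Fintype.card ι) * spread x := by field_simp; ring

theorem spread_step_le {a : ι → ℝ} (ha : ∀ i, a i ∈ Set.Icc (0 : ℝ) 1) (x : ι → E) :
    spread (step a x) ≤ contractionCoeff a * spread x := by
  cases isEmpty_or_nonempty ι
  · simp [spread]
  refine spread_le fun i j => ?_
  rcases le_total (a j) (a i) with hji | hij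
  · exact (norm_step_sub_step_le ha x hji).trans
      (mul_le_mul_of_nonneg_right (le_contractionCoeff hji) (spread_nonneg x))
  · rw [norm_sub_rev]
    exact (norm_step_sub_step_le ha x hij).trans
      (mul_le_mul_of_nonneg_right (le_contractionCoeff hij) (spread_nonneg x))

theorem spread_step_le_spread {a : ι → ℝ} (ha : ∀ i, a i ∈ Set.Icc (0 : ℝ) 1) (x : ι → E) :
    spread (step a x) ≤ spread x :=
  (spread_step_le ha x).trans
    (mul_le_of_le_one_left (spread_nonneg x) (contractionCoeff_le_one ha))

end MixedHK

theorem tendsto_zero_of_le_mul_of_limsup_lt_one {D β : ℕ → ℝ} (hD : ∀ t, 0 ≤ D t)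
    (hβ : IsBoundedUnder (· ≤ ·) atTop β) (hstep : ∀ᶠ t in atTop, D (t + 1) ≤ β t * D t)
    (hlim : limsup β atTop < 1) : Tendsto D atTop (𝓝 0) := by
  obtain ⟨c, hβc, hc1⟩ := exists_between hlim
  set r := max c 0
  have hr1 : r < 1 := max_lt hc1 one_pos
  obtain ⟨T, hT⟩ := eventually_atTop.mp
    ((eventually_lt_of_limsup_lt hβc hβ).and hstep)
  have hgeom : ∀ s, D (s + T) ≤ r ^ s * D T := by
    intro s
    induction s with
    | zero => simp
    | succ s ih =>
      calc D (s + 1 + T) = D (s + T + 1) := by rw [Nat.add_right_comm]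
        _ ≤ β (s + T) * D (s + T) := (hT _ (Nat.le_add_left T s)).2
        _ ≤ r * (r ^ s * D T) :=
          mul_le_mul (le_max_of_le_left (hT _ (Nat.le_add_left T s)).1.le) ih (hD _)
            (le_max_right c 0)
        _ = r ^ (s + 1) * D T := by ring
  rw [← tendsto_add_atTop_iff_nat T]
  refine squeeze_zero (fun s => hD _) hgeom ?_
  simpa using (tendsto_pow_atTop_nhds_zero_of_lt_one (le_max_right c 0) hr1).mul_const (D T)

open MixedHK

theorem mixedHK_consensus_of_limsup_lt_one_general (n d : ℕ) (ε : ℝ)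
    (x : ℕ → Fin n → EuclideanSpace ℝ (Fin d))
    (α : ℕ → Fin n → ℝ) (hα : ∀ t i, α t i ∈ Set.Icc (0 : ℝ) 1)
    (N : ℕ → Fin n → Finset (Fin n))
    (hN : ∀ t i, N t i = Finset.univ.filter (fun j => ‖x t i - x t j‖ ≤ ε))
    (hupd : ∀ t i, x (t + 1) i
      = α t i • x t i + ((1 - α t i) / ((N t i).card : ℝ)) • ∑ j ∈ N t i, x t j)
    (β : ℕ → ℝ)
    (hβ : ∀ t, β t = ⨆ i : Fin n, ⨆ j : Fin n, ⨆ _ : α t j ≤ α t i,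
            (α t i - (α t i - α t j) / (n : ℝ)))
    (hlimsup : limsup β atTop < 1)
    (t₀ : ℕ) (htriv : ∀ i j, ‖x t₀ i - x t₀ j‖ ≤ ε) :
    Tendsto (fun t => ⨆ i : Fin n, ⨆ j : Fin n, ‖x t i - x t j‖) atTop (nhds 0) := by
  have hβ_eq : ∀ t, β t = contractionCoeff (α t) := by
    simp only [hβ, contractionCoeff, Fintype.card_fin, implies_true]
  have hstep : ∀ t, (∀ i j, ‖x t i - x t j‖ ≤ ε) → x (t + 1) = step (α t) (x t) := by
    intro t ht
    funext i
    have hNi : N t i = Finset.univ := by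
      rw [hN]; exact Finset.filter_true_of_mem fun j _ => ht i j
    rw [hupd, hNi, Finset.card_univ, step]
  have htriv_all : ∀ t ≥ t₀, ∀ i j, ‖x t i - x t j‖ ≤ ε := by
    intro t ht
    induction t, ht using Nat.le_induction with
    | base => exact htriv
    | succ t _ ih =>
      intro i j
      have : Nonempty (Fin n) := ⟨i⟩
      rw [hstep t ih]
      exact (norm_sub_le_spread _ i j).trans
        ((spread_step_le_spread (hα t) _).trans (spread_le ih))
  refine tendsto_zero_of_le_mul_of_limsup_lt_one (fun t => spread_nonneg (x t))
    ⟨1, eventually_map.mpr (Eventually.of_forall fun t => ?_)⟩ ?_ hlimsup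
  · exact (hβ_eq t).trans_le (contractionCoeff_le_one (hα t))
  · filter_upwards [eventually_ge_atTop t₀] with t ht
    rw [hstep t (htriv_all t ht), hβ_eq]
    exact spread_step_le (hα t) (x t)

/-- Theorem 1: in the mixed HK model, if the configuration is ε-trivial at some
time `t₀` and `limsup β t < 1`, then the maximal pairwise distance tends to
zero, i.e., a consensus is reached asymptotically. -/
theorem mixedHK_consensus_of_limsup_lt_one (n d : ℕ) (ε : ℝ) (hε : 0 < ε)
    (x : ℕ → Fin n → EuclideanSpace ℝ (Fin d))
    (α : ℕ → Fin n → ℝ) (hα : ∀ t i, α t i ∈ Set.Icc (0 : ℝ) 1)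
    (N : ℕ → Fin n → Finset (Fin n))
    (hN : ∀ t i, N t i = Finset.univ.filter (fun j => ‖x t i - x t j‖ ≤ ε))
    (hupd : ∀ t i, x (t + 1) i
      = α t i • x t i + ((1 - α t i) / ((N t i).card : ℝ)) • ∑ j ∈ N t i, x t j)
    (β : ℕ → ℝ)
    (hβ : ∀ t, β t = ⨆ i : Fin n, ⨆ j : Fin n, ⨆ _ : α t j ≤ α t i,
            (α t i - (α t i - α t j) / (n : ℝ)))
    (hlimsup : limsup β atTop < 1)
    (t₀ : ℕ) (htriv : ∀ i j, ‖x t₀ i - x t₀ j‖ ≤ ε) :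
    Tendsto (fun t => ⨆ i : Fin n, ⨆ j : Fin n, ‖x t i - x t j‖) atTop (nhds 0) :=
  mixedHK_consensus_of_limsup_lt_one_general n d ε x α hα N hN hupd β hβ hlimsup t₀ htriv
end

section
/- In the mixed HK model, the quantity Z(t) = Σ_{i,j ∈ [n]} min(‖xᵢ(t) - xⱼ(t)‖², ε²) is nonincreasing in t. Moreover, Z(t) - Z(t+1) ≥ 4 Σ_{i=1}^n (1 + |Nᵢ(t)| · (αᵢ(t)/(1-αᵢ(t))) · 1{αᵢ(t) < 1}) ‖xᵢ(t) - xᵢ(t+1)‖². -/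
/-!
Write `vᵢ = xᵢ(t) - xᵢ(t+1)`; the update rule says `vᵢ = (1 - αᵢ)/|Nᵢ| • sᵢ` with
`sᵢ = ∑_{j ∈ Nᵢ} (xᵢ - xⱼ)`. A pair that is not a neighbour pair at time `t` contributes `ε²` to
`Z(t)`, which bounds its contribution to `Z(t+1)`, so `Z(t) - Z(t+1)` dominates the sum over
neighbour pairs of `‖xᵢ - xⱼ‖² - ‖(xᵢ - xⱼ) - (vᵢ - vⱼ)‖² = 2⟪xᵢ - xⱼ, vᵢ - vⱼ⟫ - ‖vᵢ - vⱼ‖²`.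
The neighbour relation is symmetric, so the cross terms add up to
`4 ∑ ⟪sᵢ, vᵢ⟫ = 4 ∑ |Nᵢ|/(1 - αᵢ) ‖vᵢ‖²`, while the parallelogram law bounds
`∑∑ ‖vᵢ - vⱼ‖²` by `4 ∑ (|Nᵢ| - 1) ‖vᵢ‖²`; the difference of the coefficients is the weight.
-/

open Finset RealInnerProductSpace

section SymmetricNeighborhoods

variable {ι E : Type*} [Fintype ι] [NormedAddCommGroup E] [InnerProductSpace ℝ E]
  {M : ι → Finset ι}

theorem sum_sum_swap_of_symm (hM : ∀ i j, j ∈ M i ↔ i ∈ M j) {β : Type*} [AddCommMonoid β]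
    (f : ι → ι → β) : ∑ i, ∑ j ∈ M i, f i j = ∑ i, ∑ j ∈ M i, f j i :=
  sum_comm' fun i j => by simp [hM i j]

theorem sum_sum_inner_sub_sub (hM : ∀ i j, j ∈ M i ↔ i ∈ M j) (y v : ι → E) :
    ∑ i, ∑ j ∈ M i, ⟪y i - y j, v i - v j⟫ = 2 * ∑ i, ⟪∑ j ∈ M i, (y i - y j), v i⟫ := by
  have hsplit : ∀ i j, ⟪y i - y j, v i - v j⟫ = ⟪y i - y j, v i⟫ + ⟪y j - y i, v j⟫ := by
    intro i j
    rw [inner_sub_right, ← neg_sub (y i), inner_neg_left, sub_eq_add_neg]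
  simp only [hsplit, sum_add_distrib]
  rw [← sum_sum_swap_of_symm hM (fun i j => ⟪y i - y j, v i⟫), two_mul]
  simp only [sum_inner]

theorem sum_sum_norm_sub_sq_le (hM : ∀ i j, j ∈ M i ↔ i ∈ M j) (hself : ∀ i, i ∈ M i)
    (v : ι → E) :
    ∑ i, ∑ j ∈ M i, ‖v i - v j‖ ^ 2 ≤ 4 * ∑ i, (((M i).card : ℝ) - 1) * ‖v i‖ ^ 2 := by
  have hpar : ∀ i j, ‖v i - v j‖ ^ 2 = 2 * ‖v i‖ ^ 2 + 2 * ‖v j‖ ^ 2 - ‖v i + v j‖ ^ 2 := by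
    intro i j
    linarith [parallelogram_law_with_norm ℝ (v i) (v j)]
  have hswap : ∑ i, ∑ j ∈ M i, ‖v j‖ ^ 2 = ∑ i, ∑ j ∈ M i, ‖v i‖ ^ 2 :=
    sum_sum_swap_of_symm hM fun i j => ‖v j‖ ^ 2
  have hdiag : ∑ i, 4 * ‖v i‖ ^ 2 ≤ ∑ i, ∑ j ∈ M i, ‖v i + v j‖ ^ 2 := by
    refine sum_le_sum fun i _ => ?_
    calc 4 * ‖v i‖ ^ 2 = ‖v i + v i‖ ^ 2 := by rw [← two_smul ℝ, norm_smul]; norm_num; ring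
      _ ≤ ∑ j ∈ M i, ‖v i + v j‖ ^ 2 :=
        single_le_sum (f := fun j => ‖v i + v j‖ ^ 2) (fun _ _ => sq_nonneg _) (hself i)
  calc ∑ i, ∑ j ∈ M i, ‖v i - v j‖ ^ 2
      = 2 * ∑ i, ∑ j ∈ M i, ‖v i‖ ^ 2 + 2 * ∑ i, ∑ j ∈ M i, ‖v j‖ ^ 2
          - ∑ i, ∑ j ∈ M i, ‖v i + v j‖ ^ 2 := by
        simp only [hpar, sum_sub_distrib, sum_add_distrib, mul_sum]
    _ ≤ 4 * ∑ i, ∑ j ∈ M i, ‖v i‖ ^ 2 - ∑ i, 4 * ‖v i‖ ^ 2 := by rw [hswap]; linarith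
    _ = 4 * ∑ i, (((M i).card : ℝ) - 1) * ‖v i‖ ^ 2 := by
        simp only [sum_const, nsmul_eq_mul, mul_sum, ← sum_sub_distrib]
        exact sum_congr rfl fun i _ => by ring

theorem four_mul_sum_le_sum_sum_sq_sub_sq (hM : ∀ i j, j ∈ M i ↔ i ∈ M j)
    (hself : ∀ i, i ∈ M i) (y z : ι → E) :
    4 * ∑ i, (⟪∑ j ∈ M i, (y i - y j), y i - z i⟫ - (((M i).card : ℝ) - 1) * ‖y i - z i‖ ^ 2)
      ≤ ∑ i, ∑ j ∈ M i, (‖y i - y j‖ ^ 2 - ‖z i - z j‖ ^ 2) := by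
  set v := fun i => y i - z i
  have hexpand : ∀ i j, ‖y i - y j‖ ^ 2 - ‖z i - z j‖ ^ 2
      = 2 * ⟪y i - y j, v i - v j⟫ - ‖v i - v j‖ ^ 2 := by
    intro i j
    have hz : z i - z j = (y i - y j) - (v i - v j) := by simp only [v]; abel
    rw [hz, norm_sub_sq_real (y i - y j)]
    ring
  calc 4 * ∑ i, (⟪∑ j ∈ M i, (y i - y j), v i⟫ - (((M i).card : ℝ) - 1) * ‖v i‖ ^ 2)
      = 2 * (2 * ∑ i, ⟪∑ j ∈ M i, (y i - y j), v i⟫)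
          - 4 * ∑ i, (((M i).card : ℝ) - 1) * ‖v i‖ ^ 2 := by
        rw [sum_sub_distrib]; ring
    _ ≤ 2 * ∑ i, ∑ j ∈ M i, ⟪y i - y j, v i - v j⟫ - ∑ i, ∑ j ∈ M i, ‖v i - v j‖ ^ 2 := by
        rw [sum_sum_inner_sub_sub hM]
        linarith [sum_sum_norm_sub_sq_le hM hself v]
    _ = ∑ i, ∑ j ∈ M i, (‖y i - y j‖ ^ 2 - ‖z i - z j‖ ^ 2) := by
        simp only [hexpand, sum_sub_distrib, mul_sum]

end SymmetricNeighborhoods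

section HegselmannKrause

variable {ι E : Type*} [Fintype ι] [SeminormedAddCommGroup E]

noncomputable def hkNeighbors (ε : ℝ) (y : ι → E) (i : ι) : Finset ι :=
  univ.filter fun j => ‖y i - y j‖ ≤ ε

def truncEnergy (ε : ℝ) (y : ι → E) : ℝ :=
  ∑ i, ∑ j, min (‖y i - y j‖ ^ 2) (ε ^ 2)

variable {ε : ℝ} {y : ι → E}

theorem mem_hkNeighbors {i j : ι} : j ∈ hkNeighbors ε y i ↔ ‖y i - y j‖ ≤ ε := by
  simp [hkNeighbors]

theorem mem_hkNeighbors_comm (i j : ι) : j ∈ hkNeighbors ε y i ↔ i ∈ hkNeighbors ε y j := by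
  simp only [mem_hkNeighbors, norm_sub_rev]

theorem self_mem_hkNeighbors (hε : 0 ≤ ε) (i : ι) : i ∈ hkNeighbors ε y i := by
  simpa [mem_hkNeighbors] using hε

theorem sum_sum_hkNeighbors_le_truncEnergy_sub (hε : 0 ≤ ε) (z : ι → E) :
    ∑ i, ∑ j ∈ hkNeighbors ε y i, (‖y i - y j‖ ^ 2 - ‖z i - z j‖ ^ 2)
      ≤ truncEnergy ε y - truncEnergy ε z := by
  rw [truncEnergy, truncEnergy, ← sum_sub_distrib]
  refine sum_le_sum fun i _ => ?_
  rw [hkNeighbors, sum_filter, ← sum_sub_distrib]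
  refine sum_le_sum fun j _ => ?_
  split_ifs with hclose
  · have hsq : ‖y i - y j‖ ^ 2 ≤ ε ^ 2 := pow_le_pow_left₀ (norm_nonneg _) hclose 2
    rw [min_eq_left hsq]
    linarith [min_le_left (‖z i - z j‖ ^ 2) (ε ^ 2)]
  · have hsq : ε ^ 2 ≤ ‖y i - y j‖ ^ 2 := pow_le_pow_left₀ hε (not_le.mp hclose).le 2
    rw [min_eq_right hsq]
    linarith [min_le_right (‖z i - z j‖ ^ 2) (ε ^ 2)]

end HegselmannKrause

theorem sub_smul_add_smul_sum_eq {ι 𝕜 E : Type*} [Field 𝕜] [CharZero 𝕜] [AddCommGroup E]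
    [Module 𝕜 E] {s : Finset ι} (hs : s.Nonempty) (a : 𝕜) (y : ι → E) (i : ι) :
    y i - (a • y i + ((1 - a) / (s.card : 𝕜)) • ∑ j ∈ s, y j)
      = ((1 - a) / (s.card : 𝕜)) • ∑ j ∈ s, (y i - y j) := by
  have hcard : (s.card : 𝕜) ≠ 0 := by exact_mod_cast hs.card_pos.ne'
  rw [sum_sub_distrib, sum_const, smul_sub, ← Nat.cast_smul_eq_nsmul 𝕜, smul_smul,
    div_mul_cancel₀ _ hcard]
  module

-- For `a < 1`: `⟪s, v⟫ = m / (1 - a) * ‖v‖ ^ 2` and `m / (1 - a) - (m - 1) = 1 + m a / (1 - a)`.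
theorem inner_sub_mul_norm_sq_of_eq_smul {E : Type*} [NormedAddCommGroup E]
    [InnerProductSpace ℝ E] {a m : ℝ} (ha : a ≤ 1) (hm : m ≠ 0) {s v : E}
    (hv : v = ((1 - a) / m) • s) :
    ⟪s, v⟫ - (m - 1) * ‖v‖ ^ 2 = (1 + if a < 1 then m * (a / (1 - a)) else 0) * ‖v‖ ^ 2 := by
  rcases ha.lt_or_eq with ha | rfl
  · have h1a : 1 - a ≠ 0 := sub_ne_zero.mpr ha.ne'
    have hs : s = (m / (1 - a)) • v := by
      rw [hv, smul_smul, show m / (1 - a) * ((1 - a) / m) = 1 by field_simp, one_smul]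
    rw [if_pos ha, hs, real_inner_smul_left, real_inner_self_eq_norm_sq]
    field_simp
    ring
  · simp [hv]

theorem hkWeight_nonneg {a : ℝ} (ha : a ∈ Set.Icc 0 1) (m : ℕ) :
    0 ≤ 1 + if a < 1 then (m : ℝ) * (a / (1 - a)) else 0 := by
  split_ifs with h
  · have := div_nonneg ha.1 (sub_pos.mpr h).le
    positivity
  · norm_num

theorem four_mul_sum_weighted_sq_le_truncEnergy_sub {ι E : Type*} [Fintype ι]
    [NormedAddCommGroup E] [InnerProductSpace ℝ E] {ε : ℝ} (hε : 0 ≤ ε) (y z : ι → E)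
    (a : ι → ℝ) (ha : ∀ i, a i ≤ 1)
    (hz : ∀ i, z i = a i • y i + ((1 - a i) / ((hkNeighbors ε y i).card : ℝ)) •
      ∑ j ∈ hkNeighbors ε y i, y j) :
    4 * ∑ i, (1 + if a i < 1 then ((hkNeighbors ε y i).card : ℝ) * (a i / (1 - a i)) else 0)
        * ‖y i - z i‖ ^ 2
      ≤ truncEnergy ε y - truncEnergy ε z := by
  have hweight : ∀ i,
      (1 + if a i < 1 then ((hkNeighbors ε y i).card : ℝ) * (a i / (1 - a i)) else 0)
        * ‖y i - z i‖ ^ 2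
      = ⟪∑ j ∈ hkNeighbors ε y i, (y i - y j), y i - z i⟫
        - (((hkNeighbors ε y i).card : ℝ) - 1) * ‖y i - z i‖ ^ 2 := by
    intro i
    have hne : (hkNeighbors ε y i).Nonempty := ⟨i, self_mem_hkNeighbors hε i⟩
    exact (inner_sub_mul_norm_sq_of_eq_smul (ha i) (by exact_mod_cast hne.card_pos.ne')
      (by rw [hz i, sub_smul_add_smul_sum_eq hne])).symm
  calc _ = 4 * ∑ i, (⟪∑ j ∈ hkNeighbors ε y i, (y i - y j), y i - z i⟫
          - (((hkNeighbors ε y i).card : ℝ) - 1) * ‖y i - z i‖ ^ 2) := by simp only [hweight]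
    _ ≤ ∑ i, ∑ j ∈ hkNeighbors ε y i, (‖y i - y j‖ ^ 2 - ‖z i - z j‖ ^ 2) :=
      four_mul_sum_le_sum_sum_sq_sub_sq mem_hkNeighbors_comm (self_mem_hkNeighbors hε) y z
    _ ≤ truncEnergy ε y - truncEnergy ε z := sum_sum_hkNeighbors_le_truncEnergy_sub hε z

/-- Lemma 8: `Z(t) = Σ_{i,j} min(‖xᵢ(t) - xⱼ(t)‖², ε²)` is nonincreasing, and
`Z(t) - Z(t+1)` dominates four times the weighted total squared displacement. -/
theorem mixedHK_energy_decreasing (n d : ℕ) (ε : ℝ) (hε : 0 < ε)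
    (x : ℕ → Fin n → EuclideanSpace ℝ (Fin d))
    (α : ℕ → Fin n → ℝ) (hα : ∀ t i, α t i ∈ Set.Icc (0 : ℝ) 1)
    (N : ℕ → Fin n → Finset (Fin n))
    (hN : ∀ t i, N t i = Finset.univ.filter (fun j => ‖x t i - x t j‖ ≤ ε))
    (hupd : ∀ t i, x (t + 1) i
      = α t i • x t i + ((1 - α t i) / ((N t i).card : ℝ)) • ∑ j ∈ N t i, x t j)
    (Z : ℕ → ℝ)
    (hZ : ∀ t, Z t = ∑ i : Fin n, ∑ j : Fin n, min (‖x t i - x t j‖ ^ 2) (ε ^ 2)) :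
    ∀ t, Z (t + 1) ≤ Z t ∧
      4 * ∑ i : Fin n,
          (1 + (if α t i < 1 then ((N t i).card : ℝ) * (α t i / (1 - α t i)) else 0))
            * ‖x t i - x (t + 1) i‖ ^ 2
        ≤ Z t - Z (t + 1) := by
  intro t
  have hNt : N t = hkNeighbors ε (x t) := funext (hN t)
  have hZt : ∀ t, Z t = truncEnergy ε (x t) := hZ
  rw [hZt, hZt, hNt]
  have hdrop := four_mul_sum_weighted_sq_le_truncEnergy_sub hε.le (x t) (x (t + 1)) (α t)
    (fun i => (hα t i).2) (fun i => hNt ▸ hupd t i)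
  refine ⟨sub_nonneg.mp (le_trans ?_ hdrop), hdrop⟩
  exact mul_nonneg zero_le_four
    (sum_nonneg fun i _ => mul_nonneg (hkWeight_nonneg (hα t i) _) (sq_nonneg _))
end

section
/- For a finite undirected graph G with Laplacian L, second smallest eigenvalue λ₂(L), maximum degree Δ(G), and isoperimetric constant i(G) = min{ |∂S|/|S| : S ⊂ V, 0 < |S| ≤ |V|/2 } where ∂S is the set of edges between S and its complement, one has 2 i(G) ≥ λ₂(L) ≥ i(G)²/(2Δ(G)). -/
/-!
Upper bound: for a set `S` attaining `i(G)`, the vector `|V| 𝟙_S - |S|` is orthogonal to `𝟙` and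
has Rayleigh quotient `|V| |∂S| / (|S| |Sᶜ|) ≤ 2 |∂S| / |S|`, because `|Sᶜ| ≥ |V| / 2`.

Lower bound: shift a unit vector `v ⊥ 𝟙` by a median `m`. The positive and negative parts of
`v - m` are each supported on at most half of the vertices, their squared norms add up to
`‖v - m‖² ≥ ‖v‖² = 1`, and together they have smaller Dirichlet energy than `v`. For a
nonnegative `f` supported on at most half of the vertices, every level set `{f > t}` has
`|∂{f > t}| ≥ i(G) |{f > t}|`, so the discrete coarea formula gives
`2 i(G) ∑ f² ≤ ∑_{x ~ y} |f x² - f y²|`; Cauchy–Schwarz together with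
`∑_{x ~ y} (f x + f y)² ≤ 4 Δ ∑ f²` turns this into `i(G)² ∑ f² ≤ Δ ∑_{x ~ y} (f x - f y)²`.
-/

open Finset Matrix

theorem sq_posPart_add_sq_negPart (a : ℝ) : a⁺ ^ 2 + a⁻ ^ 2 = a ^ 2 := by
  rcases le_total 0 a with ha | ha <;> simp [ha]

theorem sq_posPart_sub_add_sq_negPart_sub_le (a b : ℝ) :
    (a⁺ - b⁺) ^ 2 + (a⁻ - b⁻) ^ 2 ≤ (a - b) ^ 2 := by
  rcases le_total 0 a with ha | ha <;> rcases le_total 0 b with hb | hb <;>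
    simp [ha, hb] <;> nlinarith

theorem sum_indicator_one_eq_card {V R : Type*} [Fintype V] [AddCommMonoidWithOne R]
    (S : Finset V) : ∑ x, (S : Set V).indicator (1 : V → R) x = #S := by
  classical simp [Set.indicator_apply]

theorem abs_sub_eq_abs_sub_add_mul_abs_indicator_sub {V : Type*} {S : Set V} {f g : V → ℝ}
    {m : ℝ} (hm : 0 ≤ m) (hg : 0 ≤ g) (hgS : ∀ x ∉ S, g x = 0)
    (hfg : ∀ x, f x = g x + m * S.indicator 1 x) (a b : V) :
    |f a - f b| = |g a - g b| + m * |S.indicator 1 a - S.indicator 1 b| := by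
  have ha : 0 ≤ g a := hg a
  have hb : 0 ≤ g b := hg b
  by_cases h1 : a ∈ S <;> by_cases h2 : b ∈ S <;> simp [hfg, h1, h2, hgS]
  · rw [abs_of_nonneg (by positivity), abs_of_nonneg ha]
  · rw [abs_of_nonpos (by linarith), abs_of_nonneg hb]
    ring

theorem exists_median {V α : Type*} [Fintype V] [Nonempty V] [LinearOrder α] (v : V → α) :
    ∃ m, 2 * #{x | m < v x} ≤ Fintype.card V ∧ 2 * #{x | v x < m} ≤ Fintype.card V := by
  set T : Finset V := {x | Fintype.card V ≤ 2 * #{y | v y ≤ v x}}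
  have hT : T.Nonempty := by
    obtain ⟨x, -, hx⟩ := univ.exists_max_image v univ_nonempty
    refine ⟨x, mem_filter.2 ⟨mem_univ x, ?_⟩⟩
    rw [filter_true_of_mem fun y _ => hx y (mem_univ y), card_univ]
    omega
  obtain ⟨x₀, hx₀, hmin⟩ := T.exists_min_image v hT
  refine ⟨v x₀, ?_, ?_⟩
  · have hsplit := card_filter_add_card_filter_not (s := univ) (fun x => v x₀ < v x)
    simp only [not_lt, card_univ] at hsplit
    have := (mem_filter.1 hx₀).2
    omega
  · by_contra! hlarge
    have hne : ({x | v x < v x₀} : Finset V).Nonempty :=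
      card_pos.1 (by omega)
    obtain ⟨x₁, hx₁, hmax⟩ := exists_max_image _ v hne
    have hx₁T : x₁ ∈ T := mem_filter.2 ⟨mem_univ x₁, hlarge.le.trans <|
      Nat.mul_le_mul_left 2 <| card_le_card fun y hy => mem_filter.2 ⟨mem_univ y, hmax y hy⟩⟩
    exact (hmin x₁ hx₁T).not_gt (mem_filter.1 hx₁).2

theorem one_le_sum_sub_sq {V : Type*} [Fintype V] {v : V → ℝ} (hv : v ⬝ᵥ v = 1)
    (hv1 : v ⬝ᵥ (fun _ => 1) = 0) (m : ℝ) : 1 ≤ ∑ x, (v x - m) ^ 2 := by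
  have hexpand : ∑ x, (v x - m) ^ 2
      = v ⬝ᵥ v - 2 * m * (v ⬝ᵥ fun _ => 1) + Fintype.card V * m ^ 2 := by
    simp only [dotProduct, mul_sum, ← sum_sub_distrib, mul_one]
    rw [← nsmul_eq_mul, ← card_univ, ← sum_const, ← sum_add_distrib]
    exact sum_congr rfl fun x _ => by ring
  rw [hexpand, hv, hv1]
  nlinarith [sq_nonneg m, (Fintype.card V).cast_nonneg (α := ℝ)]

namespace Matrix

variable {V : Type*} [Fintype V]

def rayleighValues (M : Matrix V V ℝ) : Set ℝ :=
  {r | ∃ v : V → ℝ, v ⬝ᵥ v = 1 ∧ v ⬝ᵥ (fun _ => 1) = 0 ∧ r = v ⬝ᵥ M *ᵥ v}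

theorem div_mem_rayleighValues (M : Matrix V V ℝ) {w : V → ℝ} (hw : 0 < w ⬝ᵥ w)
    (hw1 : w ⬝ᵥ (fun _ => 1) = 0) : (w ⬝ᵥ M *ᵥ w) / (w ⬝ᵥ w) ∈ rayleighValues M := by
  set s := √(w ⬝ᵥ w)
  have hs : s ^ 2 = w ⬝ᵥ w := Real.sq_sqrt hw.le
  have hs0 : s ≠ 0 := (Real.sqrt_pos.2 hw).ne'
  refine ⟨s⁻¹ • w, ?_, ?_, ?_⟩
  · rw [smul_dotProduct, dotProduct_smul, smul_smul, smul_eq_mul, ← hs]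
    field_simp
  · rw [smul_dotProduct, hw1, smul_zero]
  · rw [mulVec_smul, smul_dotProduct, dotProduct_smul, smul_smul, smul_eq_mul, ← hs]
    field_simp

theorem rayleighValues_eq_empty [Subsingleton V] (M : Matrix V V ℝ) : rayleighValues M = ∅ := by
  refine Set.eq_empty_of_forall_notMem fun r ⟨v, hv, hv1, _⟩ => ?_
  have hv0 : ∀ x, v x = 0 := fun x => by simpa [dotProduct, Fintype.sum_subsingleton _ x] using hv1
  simp [dotProduct, hv0] at hv

end Matrix

namespace SimpleGraph

variable {V : Type*} [Fintype V] (G : SimpleGraph V) [DecidableRel G.Adj]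

def adjPairs : Finset (V × V) := {p | G.Adj p.1 p.2}

@[simp]
theorem mem_adjPairs {p : V × V} : p ∈ G.adjPairs ↔ G.Adj p.1 p.2 := by
  simp [adjPairs]

theorem sum_adjPairs_swap {M : Type*} [AddCommMonoid M] (F : V × V → M) :
    ∑ p ∈ G.adjPairs, F p.swap = ∑ p ∈ G.adjPairs, F p :=
  sum_nbij' Prod.swap Prod.swap (by simp [G.adj_comm]) (by simp [G.adj_comm])
    (by simp) (by simp) (by simp)

theorem sum_adjPairs_fst (h : V → ℝ) :
    ∑ p ∈ G.adjPairs, h p.1 = ∑ i, (G.degree i : ℝ) * h i := by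
  simp_rw [adjPairs, sum_filter, Fintype.sum_prod_type, ← sum_filter, sum_const,
    ← neighborFinset_eq_filter, card_neighborFinset_eq_degree, nsmul_eq_mul]

theorem sum_adjPairs_snd (h : V → ℝ) :
    ∑ p ∈ G.adjPairs, h p.2 = ∑ i, (G.degree i : ℝ) * h i := by
  rw [← sum_adjPairs_fst, ← G.sum_adjPairs_swap]
  rfl

theorem sum_adjPairs_add_sq_le (f : V → ℝ) :
    ∑ p ∈ G.adjPairs, (f p.1 + f p.2) ^ 2 ≤ 4 * G.maxDegree * ∑ x, f x ^ 2 := by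
  calc ∑ p ∈ G.adjPairs, (f p.1 + f p.2) ^ 2
      ≤ ∑ p ∈ G.adjPairs, (2 * f p.1 ^ 2 + 2 * f p.2 ^ 2) :=
        sum_le_sum fun p _ => by nlinarith [sq_nonneg (f p.1 - f p.2)]
    _ = 4 * ∑ x, (G.degree x : ℝ) * f x ^ 2 := by
        rw [sum_add_distrib, ← mul_sum, ← mul_sum, sum_adjPairs_fst G (f · ^ 2),
          sum_adjPairs_snd G (f · ^ 2)]
        ring
    _ ≤ 4 * ∑ x, (G.maxDegree : ℝ) * f x ^ 2 := by
        gcongr with x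
        exact_mod_cast G.degree_le_maxDegree x
    _ = 4 * G.maxDegree * ∑ x, f x ^ 2 := by
        rw [← mul_sum, mul_assoc]

variable [DecidableEq V]

theorem lapMatrix_eq_of (R : Type*) [AddGroupWithOne R] :
    G.lapMatrix R =
      of fun i j => (if i = j then (G.degree i : R) else 0) - if G.Adj i j then 1 else 0 := by
  ext i j
  simp [lapMatrix, degMatrix, adjMatrix, diagonal_apply]

theorem dotProduct_lapMatrix_mulVec (x : V → ℝ) :
    x ⬝ᵥ G.lapMatrix ℝ *ᵥ x = (∑ p ∈ G.adjPairs, (x p.1 - x p.2) ^ 2) / 2 := by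
  rw [← toLinearMap₂'_apply', lapMatrix_toLinearMap₂', adjPairs, sum_filter,
    Fintype.sum_prod_type]

theorem sum_adjPairs_abs_indicator_sub (S : Finset V) :
    ∑ p ∈ G.adjPairs, |(S : Set V).indicator 1 p.1 - (S : Set V).indicator (1 : V → ℝ) p.2|
      = 2 * #(G.interedges S Sᶜ) := by
  have h : ∀ p : V × V, |(S : Set V).indicator 1 p.1 - (S : Set V).indicator (1 : V → ℝ) p.2|
      = (if p.1 ∈ S ∧ p.2 ∉ S then 1 else 0) + (if p.2 ∈ S ∧ p.1 ∉ S then 1 else 0) := by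
    intro p
    by_cases h1 : p.1 ∈ S <;> by_cases h2 : p.2 ∈ S <;> simp [h1, h2]
  have hcut : ({p ∈ G.adjPairs | p.1 ∈ S ∧ p.2 ∉ S} : Finset (V × V)) = G.interedges S Sᶜ := by
    ext p
    simp only [mem_filter, mem_adjPairs, mem_interedges_iff, mem_compl]
    tauto
  simp_rw [h, sum_add_distrib]
  have hswap := G.sum_adjPairs_swap fun p => if p.1 ∈ S ∧ p.2 ∉ S then (1 : ℝ) else 0
  simp only [Prod.fst_swap, Prod.snd_swap] at hswap
  rw [hswap, sum_boole, hcut]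
  ring

theorem two_mul_sum_le_sum_adjPairs_abs_sub {c : ℝ} {f : V → ℝ} (hf : 0 ≤ f)
    (hcut : ∀ S : Finset V, (∀ x ∈ S, 0 < f x) → c * #S ≤ #(G.interedges S Sᶜ)) :
    2 * c * ∑ x, f x ≤ ∑ p ∈ G.adjPairs, |f p.1 - f p.2| := by
  induction hn : #{x | 0 < f x} using Nat.strong_induction_on generalizing f with
  | _ n ih =>
  set S : Finset V := {x | 0 < f x}
  have hfS : ∀ x ∉ S, f x = 0 := fun x hx =>
    le_antisymm (not_lt.1 (by simpa [S] using hx)) (hf x)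
  rcases S.eq_empty_or_nonempty with hS | hS
  · have : f = 0 := funext fun x => hfS x (by simp [hS])
    simp [this]
  -- Peel off the bottom layer: `f = g + m 𝟙_S`, where `m` is the least positive value of `f`
  -- and `g ≥ 0` vanishes at a minimiser, so has smaller support.
  obtain ⟨x₀, hx₀, hmin⟩ := S.exists_min_image f hS
  set m := f x₀
  set g : V → ℝ := fun x => f x - m * (S : Set V).indicator 1 x
  have hg : 0 ≤ g := fun x => by
    by_cases hx : x ∈ S
    · simpa [g, hx] using hmin x hx
    · simp [g, hx, hfS x hx]
  have hgS : ∀ x ∉ S, g x = 0 := fun x hx => by simp [g, hx, hfS x hx]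
  have hsupp : ({x | 0 < g x} : Finset V) ⊆ S.erase x₀ := fun x hx => by
    simp only [mem_filter, mem_univ, true_and] at hx
    have hxS : x ∈ S := by_contra fun h => hx.ne' (hgS x h)
    refine mem_erase.2 ⟨fun h => ?_, hxS⟩
    simp [g, h, hx₀, m] at hx
  have hcard : #{x | 0 < g x} < n :=
    hn ▸ (card_le_card hsupp).trans_lt (card_erase_lt_of_mem hx₀)
  have hgf : ∀ x, 0 < g x → 0 < f x := fun x hx => by
    simpa [S] using mem_of_mem_erase (hsupp (by simpa using hx))
  have hm : 0 ≤ m := hf x₀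
  have hsum : ∑ x, f x = ∑ x, g x + m * #S := by
    simp only [g, sum_sub_distrib, ← mul_sum, sum_indicator_one_eq_card, sub_add_cancel]
  have hedge : ∑ p ∈ G.adjPairs, |f p.1 - f p.2|
      = ∑ p ∈ G.adjPairs, |g p.1 - g p.2| + m * (2 * #(G.interedges S Sᶜ)) := by
    rw [← sum_adjPairs_abs_indicator_sub, mul_sum, ← sum_add_distrib]
    exact sum_congr rfl fun p _ => abs_sub_eq_abs_sub_add_mul_abs_indicator_sub hm hg hgS
      (fun x => by simp [g]) p.1 p.2
  have hg_ih := ih _ hcard hg (fun T hT => hcut T fun x hx => hgf x (hT x hx)) rfl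
  have hS_cut := mul_le_mul_of_nonneg_left (hcut S (by simp [S])) (mul_nonneg zero_le_two hm)
  rw [hsum, hedge]
  linarith

theorem sq_mul_sum_sq_le_maxDegree_mul {c : ℝ} (hc : 0 ≤ c) {f : V → ℝ} (hf : 0 ≤ f)
    (hcut : ∀ S : Finset V, (∀ x ∈ S, 0 < f x) → c * #S ≤ #(G.interedges S Sᶜ)) :
    c ^ 2 * ∑ x, f x ^ 2 ≤ G.maxDegree * ∑ p ∈ G.adjPairs, (f p.1 - f p.2) ^ 2 := by
  set A := ∑ x, f x ^ 2
  set Q := ∑ p ∈ G.adjPairs, (f p.1 - f p.2) ^ 2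
  have hcoarea : 2 * c * A ≤ ∑ p ∈ G.adjPairs, |f p.1 - f p.2| * |f p.1 + f p.2| := by
    have hfactor : ∀ p : V × V, |f p.1 - f p.2| * |f p.1 + f p.2| = |f p.1 ^ 2 - f p.2 ^ 2| :=
      fun p => by rw [← abs_mul]; ring_nf
    simp_rw [hfactor]
    refine G.two_mul_sum_le_sum_adjPairs_abs_sub (fun x => sq_nonneg (f x)) fun S hS => ?_
    exact hcut S fun x hx => lt_of_le_of_ne (hf x) fun h => by simpa [← h] using hS x hx
  have hCS := sum_mul_sq_le_sq_mul_sq G.adjPairs (fun p => |f p.1 - f p.2|)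
    (fun p => |f p.1 + f p.2|)
  simp only [sq_abs] at hCS
  have hQ : 0 ≤ Q := sum_nonneg fun p _ => sq_nonneg _
  have hdeg := mul_le_mul_of_nonneg_left (G.sum_adjPairs_add_sq_le f) hQ
  have hA : 0 ≤ A := sum_nonneg fun x _ => sq_nonneg (f x)
  have key : (2 * c * A) ^ 2 ≤ Q * (4 * G.maxDegree * A) :=
    (pow_le_pow_left₀ (by positivity) hcoarea 2).trans (hCS.trans hdeg)
  rcases hA.eq_or_lt with hA0 | hApos
  · rw [← hA0, mul_zero]
    positivity
  · refine le_of_mul_le_mul_right ?_ (mul_pos four_pos hApos)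
    nlinarith

theorem sq_le_two_mul_maxDegree_mul_dotProduct_lapMatrix_mulVec {c : ℝ} (hc : 0 ≤ c)
    (hcut : ∀ S : Finset V, 2 * #S ≤ Fintype.card V → c * #S ≤ #(G.interedges S Sᶜ))
    {v : V → ℝ} (hv : v ⬝ᵥ v = 1) (hv1 : v ⬝ᵥ (fun _ => 1) = 0) :
    c ^ 2 ≤ 2 * G.maxDegree * (v ⬝ᵥ G.lapMatrix ℝ *ᵥ v) := by
  have : Nonempty V := by
    by_contra! hV
    simp [dotProduct] at hv
  obtain ⟨m, hm_above, hm_below⟩ := exists_median v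
  set w : V → ℝ := fun x => v x - m
  have hcut_of_subset {S' : Finset V} (h : 2 * #S' ≤ Fintype.card V) {S : Finset V}
      (hS : S ⊆ S') : c * #S ≤ #(G.interedges S Sᶜ) :=
    hcut S ((Nat.mul_le_mul_left 2 (card_le_card hS)).trans h)
  have hpos := G.sq_mul_sum_sq_le_maxDegree_mul hc (posPart_nonneg w) fun S hS =>
    hcut_of_subset hm_above fun x hx => by simpa [w] using hS x hx
  have hneg := G.sq_mul_sum_sq_le_maxDegree_mul hc (negPart_nonneg w) fun S hS =>
    hcut_of_subset hm_below fun x hx => by simpa [w] using hS x hx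
  have hsplit : ∑ p ∈ G.adjPairs, (w⁺ p.1 - w⁺ p.2) ^ 2 + ∑ p ∈ G.adjPairs, (w⁻ p.1 - w⁻ p.2) ^ 2
      ≤ ∑ p ∈ G.adjPairs, (v p.1 - v p.2) ^ 2 := by
    rw [← sum_add_distrib]
    refine sum_le_sum fun p _ => ?_
    simpa [w] using sq_posPart_sub_add_sq_negPart_sub_le (w p.1) (w p.2)
  have hnorm : 1 ≤ ∑ x, w⁺ x ^ 2 + ∑ x, w⁻ x ^ 2 := by
    simpa [← sum_add_distrib, sq_posPart_add_sq_negPart, w] using one_le_sum_sub_sq hv hv1 m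
  calc c ^ 2 ≤ c ^ 2 * (∑ x, w⁺ x ^ 2 + ∑ x, w⁻ x ^ 2) := le_mul_of_one_le_right (sq_nonneg c) hnorm
    _ ≤ G.maxDegree * (∑ p ∈ G.adjPairs, (w⁺ p.1 - w⁺ p.2) ^ 2
          + ∑ p ∈ G.adjPairs, (w⁻ p.1 - w⁻ p.2) ^ 2) := by
        rw [mul_add, mul_add]
        exact add_le_add hpos hneg
    _ ≤ G.maxDegree * ∑ p ∈ G.adjPairs, (v p.1 - v p.2) ^ 2 := by gcongr
    _ = 2 * G.maxDegree * (v ⬝ᵥ G.lapMatrix ℝ *ᵥ v) := by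
        rw [dotProduct_lapMatrix_mulVec]
        ring

def isoperimetricRatios : Set ℝ :=
  {r | ∃ S : Finset V, S.Nonempty ∧ 2 * #S ≤ Fintype.card V ∧ r = #(G.interedges S Sᶜ) / #S}

theorem isoperimetricRatios_nonneg {r : ℝ} (hr : r ∈ G.isoperimetricRatios) : 0 ≤ r := by
  obtain ⟨S, -, -, rfl⟩ := hr
  positivity

theorem isoperimetricRatios_eq_empty [Subsingleton V] : G.isoperimetricRatios = ∅ := by
  refine Set.eq_empty_of_forall_notMem fun r ⟨S, hS, h2S, _⟩ => ?_
  have := Fintype.card_le_one_iff_subsingleton.2 ‹_›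
  have := hS.card_pos
  omega

theorem exists_eq_sInf_isoperimetricRatios [Nontrivial V] :
    ∃ S : Finset V, S.Nonempty ∧ 2 * #S ≤ Fintype.card V ∧
      sInf G.isoperimetricRatios = #(G.interedges S Sᶜ) / #S := by
  have hne : G.isoperimetricRatios.Nonempty := by
    obtain ⟨x⟩ := ‹Nontrivial V›.to_nonempty
    exact ⟨_, {x}, singleton_nonempty x, by simp; exact Fintype.one_lt_card, rfl⟩
  have hfin : G.isoperimetricRatios.Finite :=
    (Set.finite_range fun S : Finset V => (#(G.interedges S Sᶜ) / #S : ℝ)).subset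
      fun r ⟨S, _, _, hr⟩ => ⟨S, hr.symm⟩
  exact hne.csInf_mem hfin

theorem sInf_isoperimetricRatios_mul_card_le {S : Finset V} (h2S : 2 * #S ≤ Fintype.card V) :
    sInf G.isoperimetricRatios * #S ≤ #(G.interedges S Sᶜ) := by
  rcases S.eq_empty_or_nonempty with rfl | hS
  · simp
  rw [← le_div_iff₀ (Nat.cast_pos.2 hS.card_pos)]
  exact csInf_le ⟨0, fun _ => G.isoperimetricRatios_nonneg⟩ ⟨S, hS, h2S, rfl⟩

theorem rayleighValues_lapMatrix_nonneg {r : ℝ} (hr : r ∈ rayleighValues (G.lapMatrix ℝ)) :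
    0 ≤ r := by
  obtain ⟨v, -, -, rfl⟩ := hr
  rw [dotProduct_lapMatrix_mulVec]
  positivity

theorem mem_rayleighValues_lapMatrix_of_cut {S : Finset V} (hS : S.Nonempty)
    (hSc : Sᶜ.Nonempty) :
    (Fintype.card V : ℝ) * #(G.interedges S Sᶜ) / (#S * #Sᶜ) ∈ rayleighValues (G.lapMatrix ℝ) := by
  set N : ℝ := ↑(Fintype.card V)
  set a : ℝ := ↑(#S)
  set b : ℝ := ↑(#Sᶜ)
  have hN : N = a + b := by simp only [N, a, b]; exact_mod_cast (card_add_card_compl S).symm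
  have ha : 0 < a := Nat.cast_pos.2 hS.card_pos
  have hb : 0 < b := Nat.cast_pos.2 hSc.card_pos
  set w : V → ℝ := fun x => N * (S : Set V).indicator 1 x - a
  have hw1 : w ⬝ᵥ (fun _ => 1) = 0 := by
    simp only [w, dotProduct, mul_one, sum_sub_distrib, ← mul_sum, sum_indicator_one_eq_card,
      sum_const, card_univ, nsmul_eq_mul]
    ring
  have hww : w ⬝ᵥ w = N * a * b := by
    have hpt (x : V) : w x * w x = (N ^ 2 - 2 * N * a) * (S : Set V).indicator 1 x + a ^ 2 := by
      by_cases hx : x ∈ S <;> simp [w, hx] <;> ring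
    simp only [dotProduct, hpt, sum_add_distrib, ← mul_sum, sum_indicator_one_eq_card, sum_const,
      card_univ, nsmul_eq_mul, show (Fintype.card V : ℝ) = N from rfl, hN]
    ring
  have hquad : w ⬝ᵥ G.lapMatrix ℝ *ᵥ w = N ^ 2 * #(G.interedges S Sᶜ) := by
    have hpt (x y : V) : (w x - w y) ^ 2
        = N ^ 2 * |(S : Set V).indicator 1 x - (S : Set V).indicator 1 y| := by
      by_cases hx : x ∈ S <;> by_cases hy : y ∈ S <;> simp [w, hx, hy]
      ring
    simp only [dotProduct_lapMatrix_mulVec, hpt, ← mul_sum, sum_adjPairs_abs_indicator_sub]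
    ring
  have hpos : 0 < N * a * b := mul_pos (mul_pos (hN ▸ add_pos ha hb) ha) hb
  convert div_mem_rayleighValues _ (hww ▸ hpos) hw1 using 1
  rw [hww, hquad]
  field_simp

theorem exists_mem_rayleighValues_lapMatrix_le {S : Finset V} (hS : S.Nonempty)
    (h2S : 2 * #S ≤ Fintype.card V) :
    ∃ r ∈ rayleighValues (G.lapMatrix ℝ), r ≤ 2 * (#(G.interedges S Sᶜ) / #S) := by
  have hcard : #S ≤ #Sᶜ := by rw [card_compl]; omega
  have hSc : Sᶜ.Nonempty := card_pos.1 (hS.card_pos.trans_le hcard)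
  refine ⟨_, G.mem_rayleighValues_lapMatrix_of_cut hS hSc, ?_⟩
  have ha : (0 : ℝ) < #S := Nat.cast_pos.2 hS.card_pos
  have hb : (0 : ℝ) < #Sᶜ := Nat.cast_pos.2 hSc.card_pos
  have hN : (Fintype.card V : ℝ) ≤ 2 * #Sᶜ := by
    rw [← card_add_card_compl S]; push_cast; exact_mod_cast (by omega : #S + #Sᶜ ≤ 2 * #Sᶜ)
  rw [div_le_iff₀ (mul_pos ha hb)]
  calc (Fintype.card V : ℝ) * #(G.interedges S Sᶜ)
      ≤ 2 * #Sᶜ * #(G.interedges S Sᶜ) := by gcongr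
    _ = 2 * (#(G.interedges S Sᶜ) / #S) * (#S * #Sᶜ) := by field_simp

end SimpleGraph

open SimpleGraph in
theorem cheeger_inequality_general
    (V : Type*) [Fintype V] [DecidableEq V]
    (G : SimpleGraph V) [DecidableRel G.Adj]
    (L : Matrix V V ℝ)
    (hL : L = Matrix.of fun i j =>
      (if i = j then (G.degree i : ℝ) else 0) - (if G.Adj i j then 1 else 0))
    (lam2 : ℝ)
    (hlam2 : lam2 = sInf {r : ℝ | ∃ v : V → ℝ,
      v ⬝ᵥ v = 1 ∧ v ⬝ᵥ (fun _ => 1) = 0 ∧ r = v ⬝ᵥ L.mulVec v})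
    (iG : ℝ)
    (hiG : iG = sInf {r : ℝ | ∃ S : Finset V, S.Nonempty ∧
      2 * S.card ≤ Fintype.card V ∧
      r = (((S ×ˢ Sᶜ).filter fun p => G.Adj p.1 p.2).card : ℝ) / (S.card : ℝ)}) :
    lam2 ≤ 2 * iG ∧ iG ^ 2 / (2 * (G.maxDegree : ℝ)) ≤ lam2 := by
  rw [← lapMatrix_eq_of] at hL
  obtain rfl : lam2 = sInf (rayleighValues (G.lapMatrix ℝ)) := hL ▸ hlam2
  obtain rfl : iG = sInf G.isoperimetricRatios := hiG
  rcases subsingleton_or_nontrivial V with hV | hV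
  · simp [rayleighValues_eq_empty, isoperimetricRatios_eq_empty]
  obtain ⟨S, hS, h2S, hSmin⟩ := G.exists_eq_sInf_isoperimetricRatios
  obtain ⟨r, hr, hr_le⟩ := G.exists_mem_rayleighValues_lapMatrix_le hS h2S
  refine ⟨(csInf_le ⟨0, fun _ => G.rayleighValues_lapMatrix_nonneg⟩ hr).trans (hSmin ▸ hr_le),
    le_csInf ⟨r, hr⟩ ?_⟩
  rintro _ ⟨v, hv, hv1, rfl⟩
  refine div_le_of_le_mul₀ (by positivity) (G.rayleighValues_lapMatrix_nonneg ⟨v, hv, hv1, rfl⟩) ?_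
  rw [mul_comm]
  exact G.sq_le_two_mul_maxDegree_mul_dotProduct_lapMatrix_mulVec
    (Real.sInf_nonneg fun _ => G.isoperimetricRatios_nonneg)
    (fun S h2S => G.sInf_isoperimetricRatios_mul_card_le h2S) hv hv1

/-- Lemma 7 (Cheeger's inequality): `2 i(G) ≥ λ₂(L) ≥ i(G)² / (2 Δ(G))`, where
`λ₂(L)` is the second smallest eigenvalue of the Laplacian, characterized by
the Courant–Fischer formula as `min { vᵀLv : ‖v‖ = 1, v ⊥ 𝟙 }`. -/
theorem cheeger_inequality
    (V : Type*) [Fintype V] [DecidableEq V] [Nonempty V]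
    (G : SimpleGraph V) [DecidableRel G.Adj]
    (L : Matrix V V ℝ)
    (hL : L = Matrix.of fun i j =>
      (if i = j then (G.degree i : ℝ) else 0) - (if G.Adj i j then 1 else 0))
    (lam2 : ℝ)
    (hlam2 : lam2 = sInf {r : ℝ | ∃ v : V → ℝ,
      v ⬝ᵥ v = 1 ∧ v ⬝ᵥ (fun _ => 1) = 0 ∧ r = v ⬝ᵥ L.mulVec v})
    (iG : ℝ)
    (hiG : iG = sInf {r : ℝ | ∃ S : Finset V, S.Nonempty ∧
      2 * S.card ≤ Fintype.card V ∧
      r = (((S ×ˢ Sᶜ).filter fun p => G.Adj p.1 p.2).card : ℝ) / (S.card : ℝ)}) :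
    lam2 ≤ 2 * iG ∧ iG ^ 2 / (2 * (G.maxDegree : ℝ)) ≤ lam2 :=
  cheeger_inequality_general V G L hL lam2 hlam2 iG hiG
end

section
/- In the mixed HK model with n = 2 agents in ℝ, initial opinions x₁(0) = 0, x₂(0) = ε, and α₁(t) = α₂(t) = 1/2 for all t, the two opinions are distinct at every finite time t (so the dynamics never reaches a steady state in finite time), yet x₂(t) - x₁(t) = ε/2^t → 0. -/
open Filter Finset

/-! Once the two opinions are within `ε` of each other, each agent's neighbourhood is both agents,
so both move by the same amount towards the common mean and the gap is multiplied by the stubbornness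
`1/2`. The gap `ε / 2 ^ t` therefore stays within `ε`, stays positive, and tends to `0`. -/

section MixedHK

variable {ι : Type*} {x : ℕ → ι → ℝ} {α : ℕ → ι → ℝ} {N : ℕ → ι → Finset ι}
  {ε : ℝ} {t : ℕ}

lemma mixedHK_sub_succ_eq_mul
    (hupd : ∀ t i, x (t + 1) i
      = α t i * x t i + ((1 - α t i) / ((N t i).card : ℝ)) * ∑ j ∈ N t i, x t j)
    {i j : ι} (hα : α t i = α t j) (hN : N t i = N t j) :
    x (t + 1) i - x (t + 1) j = α t i * (x t i - x t j) := by
  rw [hupd, hupd, hα, hN]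
  ring

lemma mixedHK_neighbors_eq_univ [Fintype ι]
    (hN : ∀ t i, N t i = univ.filter (fun j => |x t i - x t j| ≤ ε))
    (hclose : ∀ i j, |x t i - x t j| ≤ ε) (i : ι) : N t i = univ := by
  rw [hN]
  exact filter_true_of_mem fun j _ => hclose i j

end MixedHK

lemma Fin.two_abs_sub_le {y : Fin 2 → ℝ} {ε : ℝ} (hε : 0 ≤ ε) (h : |y 1 - y 0| ≤ ε)
    (i j : Fin 2) : |y i - y j| ≤ ε := by
  fin_cases i <;> fin_cases j <;> simp [hε, h, abs_sub_comm (y 0)]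

lemma mixedHK_two_sub_eq_mul_pow {x : ℕ → Fin 2 → ℝ} {α : ℕ → Fin 2 → ℝ}
    {N : ℕ → Fin 2 → Finset (Fin 2)} {ε a : ℝ} (ha₀ : 0 ≤ a) (ha₁ : a ≤ 1)
    (hα : ∀ t i, α t i = a)
    (hN : ∀ t i, N t i = univ.filter (fun j => |x t i - x t j| ≤ ε))
    (hupd : ∀ t i, x (t + 1) i
      = α t i * x t i + ((1 - α t i) / ((N t i).card : ℝ)) * ∑ j ∈ N t i, x t j)
    (h₀ : 0 ≤ x 0 1 - x 0 0) (hε : x 0 1 - x 0 0 ≤ ε) (t : ℕ) :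
    x t 1 - x t 0 = (x 0 1 - x 0 0) * a ^ t := by
  induction t with
  | zero => simp
  | succ t ih =>
    have hclose : |x t 1 - x t 0| ≤ ε := by
      rw [ih, abs_of_nonneg (by positivity)]
      calc (x 0 1 - x 0 0) * a ^ t ≤ (x 0 1 - x 0 0) * 1 :=
            mul_le_mul_of_nonneg_left (pow_le_one₀ ha₀ ha₁) h₀
        _ ≤ ε := by linarith
    have hNt := mixedHK_neighbors_eq_univ hN (Fin.two_abs_sub_le (h₀.trans hε) hclose)
    rw [mixedHK_sub_succ_eq_mul hupd (by rw [hα, hα]) (by rw [hNt, hNt]), ih, hα, pow_succ]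
    ring

/-- Example: with two agents, initial opinions `0` and `ε`, and stubbornness
`1/2` for both agents at all times, the opinions stay distinct at every finite
time while their gap `ε / 2^t` tends to zero. -/
theorem mixedHK_two_agents_never_terminates (ε : ℝ) (hε : 0 < ε)
    (x : ℕ → Fin 2 → ℝ)
    (α : ℕ → Fin 2 → ℝ) (hα : ∀ t i, α t i = 1 / 2)
    (N : ℕ → Fin 2 → Finset (Fin 2))
    (hN : ∀ t i, N t i = Finset.univ.filter (fun j => |x t i - x t j| ≤ ε))
    (hupd : ∀ t i, x (t + 1) i
      = α t i * x t i + ((1 - α t i) / ((N t i).card : ℝ)) * ∑ j ∈ N t i, x t j)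
    (h0 : x 0 0 = 0) (h1 : x 0 1 = ε) :
    (∀ t, x t 0 ≠ x t 1 ∧ x t 1 - x t 0 = ε / 2 ^ t) ∧
    Tendsto (fun t => x t 1 - x t 0) atTop (nhds 0) := by
  have hgap : ∀ t, x t 1 - x t 0 = ε * (1 / 2) ^ t := by
    simpa [h0, h1] using mixedHK_two_sub_eq_mul_pow (by norm_num) (by norm_num) hα hN hupd
      (by simpa [h0, h1] using hε.le) (by simp [h0, h1])
  refine ⟨fun t => ⟨fun h => ?_, by rw [hgap, one_div_pow, mul_one_div]⟩, ?_⟩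
  · have hpos : 0 < ε * (1 / 2 : ℝ) ^ t := by positivity
    linarith [hgap t]
  · simpa [hgap] using
      (tendsto_pow_atTop_nhds_zero_of_lt_one (by norm_num : (0 : ℝ) ≤ 1 / 2) (by norm_num)).const_mul ε
end

section
/- Suppose in the mixed HK model that every connected component of the opinion profile graph G(t) is δ-trivial for some 0 < δ ≤ ε/4, and that at time t+1 some edge of G(t+1) joins two agents lying in different components of G(t). Then the component of G(t+1) containing that edge is (ε/2)-nontrivial; i.e., there exist i, j with ‖xᵢ(t+1) - xⱼ(t+1)‖ > ε/2 within one component of G(t+1). -/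
/-!
Every agent moves to a convex combination of its own opinion and the opinions of its
ε-neighbours, all of which lie in its δ-trivial component of `G t`, so it moves by at most `δ`.
Two agents from different components of `G t` start more than `ε` apart, hence end more than
`ε - 2δ ≥ ε / 2` apart.
-/

open Finset

theorem Convex.smul_add_div_card_smul_sum_mem {ι E : Type*} [AddCommGroup E] [Module ℝ E]
    {C : Set E} (hC : Convex ℝ C) {s : Finset ι} (hs : s.Nonempty) {v : E} {w : ι → E}
    (hv : v ∈ C) (hw : ∀ j ∈ s, w j ∈ C) {a : ℝ} (ha : a ∈ Set.Icc (0 : ℝ) 1) :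
    a • v + ((1 - a) / #s) • ∑ j ∈ s, w j ∈ C := by
  have havg : (#s : ℝ)⁻¹ • ∑ j ∈ s, w j ∈ C := by
    simpa [Finset.centerMass] using
      hC.centerMass_mem (w := fun _ => (1 : ℝ)) (by simp) (by simpa using hs) hw
  convert hC hv havg ha.1 (sub_nonneg.2 ha.2) (by ring) using 2
  rw [smul_smul, div_eq_mul_inv]

theorem lt_norm_sub_of_lt_norm_sub {E : Type*} [SeminormedAddCommGroup E] {a b a' b' : E}
    {ε δ : ℝ} (h : ε < ‖a - b‖) (ha : ‖a' - a‖ ≤ δ) (hb : ‖b' - b‖ ≤ δ) :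
    ε - 2 * δ < ‖a' - b'‖ := by
  have := dist_triangle4 a a' b' b
  simp only [dist_eq_norm, norm_sub_rev a a'] at this
  linarith

theorem mixedHK_component_interaction_eps_half_nontrivial_general
    (n d : ℕ) (ε δ : ℝ) (hε : 0 < ε) (hδ : δ ≤ ε / 4)
    (x : ℕ → Fin n → EuclideanSpace ℝ (Fin d))
    (α : ℕ → Fin n → ℝ) (hα : ∀ t i, α t i ∈ Set.Icc (0 : ℝ) 1)
    (N : ℕ → Fin n → Finset (Fin n))
    (hN : ∀ t i, N t i = Finset.univ.filter (fun j => ‖x t i - x t j‖ ≤ ε))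
    (hupd : ∀ t i, x (t + 1) i
      = α t i • x t i + ((1 - α t i) / ((N t i).card : ℝ)) • ∑ j ∈ N t i, x t j)
    (G : ℕ → SimpleGraph (Fin n))
    (hG : ∀ t i j, (G t).Adj i j ↔ i ≠ j ∧ ‖x t i - x t j‖ ≤ ε)
    (t : ℕ)
    (htriv : ∀ i j, (G t).Reachable i j → ‖x t i - x t j‖ ≤ δ) :
    ∀ i j, (G (t + 1)).Adj i j → ¬ (G t).Reachable i j →
      ε / 2 < ‖x (t + 1) i - x (t + 1) j‖ := by
  have reachable_of_le : ∀ i j, ‖x t i - x t j‖ ≤ ε → (G t).Reachable i j := fun i j h => by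
    rcases eq_or_ne i j with rfl | hij
    · rfl
    · exact ((hG t i j).2 ⟨hij, h⟩).reachable
  have step : ∀ i, ‖x (t + 1) i - x t i‖ ≤ δ := by
    intro i
    have hnbr : ∀ j ∈ N t i, x t j ∈ Metric.closedBall (x t i) δ := fun j hj => by
      rw [hN, mem_filter] at hj
      rw [Metric.mem_closedBall, dist_comm, dist_eq_norm]
      exact htriv i j (reachable_of_le i j hj.2)
    have hi : i ∈ N t i := by simp [hN, hε.le]
    have := (convex_closedBall (x t i) δ).smul_add_div_card_smul_sum_mem ⟨i, hi⟩
      (hnbr i hi) hnbr (hα t i)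
    rwa [← hupd, Metric.mem_closedBall, dist_eq_norm] at this
  intro i j hadj hnr
  have hfar : ε < ‖x t i - x t j‖ := not_le.1 fun h => hnr (reachable_of_le i j h)
  linarith [lt_norm_sub_of_lt_norm_sub hfar (step i) (step j)]

/-- If every component of the profile graph at time `t` is δ-trivial with
`0 < δ ≤ ε/4`, and at time `t+1` an edge joins agents from different
components of `G(t)`, then that pair is at distance more than `ε/2` at time
`t+1` (so its component in `G(t+1)` is (ε/2)-nontrivial). -/
theorem mixedHK_component_interaction_eps_half_nontrivial
    (n d : ℕ) (ε δ : ℝ) (hε : 0 < ε) (hδ0 : 0 < δ) (hδ : δ ≤ ε / 4)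
    (x : ℕ → Fin n → EuclideanSpace ℝ (Fin d))
    (α : ℕ → Fin n → ℝ) (hα : ∀ t i, α t i ∈ Set.Icc (0 : ℝ) 1)
    (N : ℕ → Fin n → Finset (Fin n))
    (hN : ∀ t i, N t i = Finset.univ.filter (fun j => ‖x t i - x t j‖ ≤ ε))
    (hupd : ∀ t i, x (t + 1) i
      = α t i • x t i + ((1 - α t i) / ((N t i).card : ℝ)) • ∑ j ∈ N t i, x t j)
    (G : ℕ → SimpleGraph (Fin n))
    (hG : ∀ t i j, (G t).Adj i j ↔ i ≠ j ∧ ‖x t i - x t j‖ ≤ ε)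
    (t : ℕ)
    (htriv : ∀ i j, (G t).Reachable i j → ‖x t i - x t j‖ ≤ δ) :
    ∀ i j, (G (t + 1)).Adj i j → ¬ (G t).Reachable i j →
      ε / 2 < ‖x (t + 1) i - x (t + 1) j‖ :=
  mixedHK_component_interaction_eps_half_nontrivial_general n d ε δ hε hδ x α hα N hN hupd G hG t
    htriv
end

section
/- In the mixed HK model, suppose sup_{t} max_{i ∈ [n]} αᵢ(t) =: γ < 1 and let τ be the first time every connected component of the profile graph is δ-trivial (0 < δ ≤ ε). Then τ < n^{10} (ε/δ)² / (8(1-γ)²). -/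
/-!
The truncated energy `∑ᵢ ∑ⱼ min (‖xᵢ - xⱼ‖², ε²)` lies in `[0, n²ε²]`, and one step of the dynamics
lowers it by at least `4 ∑ᵢ ‖xᵢ(t+1) - xᵢ(t)‖²`, so these step costs sum to less than `n²ε²/4`.
Conversely, if two agents `i₀, j₀` of one component are more than `δ` apart, project onto the
direction `xᵢ₀ - xⱼ₀`: of the `n` bands of width `δ/n` above `j₀` one contains no agent, and the set
`F` of agents above that band is left by an edge of a path from `i₀` to `j₀`. The pulls of `F`
towards its local means cancel inside `F` and exceed `δ/n` across the cut, which forces a step cost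
above `2δ²(1-γ)²/n⁸`. Every step before `τ` has this cost.
-/

open Finset RealInnerProductSpace

noncomputable section

namespace MixedHK

theorem exists_lt_forall_notMem_Ioc {κ : Type*} (s : Finset κ) (p : κ → ℝ) (a : ℝ) {w : ℝ}
    (hw : 0 < w) {m : ℕ} (hs : #s < m) :
    ∃ k < m, ∀ i ∈ s, p i ∉ Set.Ioc (a + k * w) (a + (k + 1) * w) := by
  classical
  obtain ⟨k, hk, hks⟩ := exists_mem_notMem_of_card_lt_card
    ((card_image_le (s := s) (f := fun i => ⌈(p i - a) / w⌉₊ - 1)).trans_lt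
      (hs.trans_eq (card_range m).symm))
  refine ⟨k, mem_range.1 hk, fun i hi ⟨hlo, hhi⟩ => hks (mem_image.2 ⟨i, hi, ?_⟩)⟩
  have hceil : ⌈(p i - a) / w⌉₊ = k + 1 := by
    rw [Nat.ceil_eq_iff k.succ_ne_zero, lt_div_iff₀ hw, div_le_iff₀ hw]
    push_cast
    constructor <;> linarith
  simp [hceil]

theorem lt_sum_sum_sub_of_mem_of_notMem {ι : Type*} {N : ι → Finset ι}
    (hN : ∀ i j, j ∈ N i ↔ i ∈ N j) (p : ι → ℝ) {w : ℝ} (hw : 0 ≤ w) {F : Finset ι}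
    (hgap : ∀ i ∈ F, ∀ j ∉ F, w < p i - p j) {a b : ι} (ha : a ∈ F) (hb : b ∉ F)
    (hab : b ∈ N a) :
    w < ∑ i ∈ F, ∑ j ∈ N i, (p i - p j) := by
  classical
  have hswap : ∑ i ∈ F, ∑ j ∈ N i ∩ F, p i = ∑ i ∈ F, ∑ j ∈ N i ∩ F, p j :=
    sum_comm' fun i j => by simp only [mem_inter, hN i j]; tauto
  have hinside : ∑ i ∈ F, ∑ j ∈ N i ∩ F, (p i - p j) = 0 := by
    simp only [sum_sub_distrib, hswap, sub_self]
  have hout : ∀ i ∈ F, ∀ j ∈ N i \ F, 0 ≤ p i - p j := fun i hi j hj =>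
    (hw.trans_lt (hgap i hi j (mem_sdiff.1 hj).2)).le
  calc w < p a - p b := hgap a ha b hb
    _ ≤ ∑ j ∈ N a \ F, (p a - p j) :=
      single_le_sum (f := fun j => p a - p j) (hout a ha) (mem_sdiff.2 ⟨hab, hb⟩)
    _ ≤ ∑ i ∈ F, ∑ j ∈ N i \ F, (p i - p j) :=
      single_le_sum (f := fun i => ∑ j ∈ N i \ F, (p i - p j))
        (fun i hi => sum_nonneg (hout i hi)) ha
    _ = ∑ i ∈ F, ∑ j ∈ N i, (p i - p j) := by
      rw [← zero_add (∑ i ∈ F, _), ← hinside, ← sum_add_distrib]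
      exact sum_congr rfl fun i _ => sum_inter_add_sum_sdiff _ _ _

variable {ι : Type*} [Fintype ι]

theorem exists_lt_sum_sum_sub_of_reachable {N : ι → Finset ι} (hN : ∀ i j, j ∈ N i ↔ i ∈ N j)
    {G : SimpleGraph ι} (hG : ∀ i j, G.Adj i j → j ∈ N i) (p : ι → ℝ) {δ : ℝ} (hδ : 0 < δ)
    {i₀ j₀ : ι} (hreach : G.Reachable i₀ j₀) (hfar : p j₀ + δ < p i₀) :
    ∃ F : Finset ι, δ / Fintype.card ι < ∑ i ∈ F, ∑ j ∈ N i, (p i - p j) := by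
  classical
  have hn : 0 < Fintype.card ι := Fintype.card_pos_iff.2 ⟨i₀⟩
  set w := δ / Fintype.card ι
  have hw : 0 < w := by positivity
  obtain ⟨k, hk, hband⟩ := exists_lt_forall_notMem_Ioc (univ.erase j₀) p (p j₀) hw
    (m := Fintype.card ι) (by rw [card_erase_of_mem (mem_univ _), card_univ]; omega)
  have hkw : (k + 1) * w ≤ δ := by
    calc (k + 1) * w ≤ Fintype.card ι * w := by gcongr; exact_mod_cast hk
      _ = δ := by simp only [w]; field_simp
  have hkw₀ : 0 ≤ k * w := by positivity
  set F := univ.filter fun i => p j₀ + k * w < p i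
  have hgap : ∀ i ∈ F, ∀ j ∉ F, w < p i - p j := by
    intro i hi j hj
    simp only [F, mem_filter, mem_univ, true_and, not_lt] at hi hj
    have hij₀ : i ≠ j₀ := by rintro rfl; linarith
    have := hband i (mem_erase.2 ⟨hij₀, mem_univ _⟩)
    simp only [Set.mem_Ioc, not_and, not_le] at this
    linarith [this hi]
  obtain ⟨d, -, hd₁, hd₂⟩ := hreach.some.exists_boundary_dart (F : Set ι)
    (by simp [F]; linarith) (by simp [F, hkw₀])
  exact ⟨F, lt_sum_sum_sub_of_mem_of_notMem hN p hw.le hgap hd₁ hd₂ (hG _ _ d.adj)⟩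

variable {E : Type*} [NormedAddCommGroup E]

def nbhd (ε : ℝ) (X : ι → E) (i : ι) : Finset ι :=
  univ.filter fun j => ‖X i - X j‖ ≤ ε

def energy (ε : ℝ) (X : ι → E) : ℝ :=
  ∑ i, ∑ j, min (‖X i - X j‖ ^ 2) (ε ^ 2)

variable {ε : ℝ} {X : ι → E} {i j : ι}

@[simp]
theorem mem_nbhd : j ∈ nbhd ε X i ↔ ‖X i - X j‖ ≤ ε := by
  simp [nbhd]

theorem mem_nbhd_comm : j ∈ nbhd ε X i ↔ i ∈ nbhd ε X j := by
  rw [mem_nbhd, mem_nbhd, norm_sub_rev]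

theorem mem_nbhd_self (hε : 0 ≤ ε) : i ∈ nbhd ε X i := by
  simpa using hε

theorem sum_sum_nbhd_comm {M : Type*} [AddCommMonoid M] (f : ι → ι → M) :
    ∑ i, ∑ j ∈ nbhd ε X i, f i j = ∑ i, ∑ j ∈ nbhd ε X i, f j i :=
  sum_comm' fun i j => by simp [mem_nbhd_comm (i := i) (j := j)]

theorem energy_nonneg (ε : ℝ) (X : ι → E) : 0 ≤ energy ε X :=
  sum_nonneg fun _ _ => sum_nonneg fun _ _ => le_min (sq_nonneg _) (sq_nonneg _)

theorem energy_le (ε : ℝ) (X : ι → E) : energy ε X ≤ Fintype.card ι ^ 2 * ε ^ 2 := by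
  calc energy ε X ≤ ∑ _i : ι, ∑ _j : ι, ε ^ 2 :=
        sum_le_sum fun _ _ => sum_le_sum fun _ _ => min_le_right _ _
    _ = Fintype.card ι ^ 2 * ε ^ 2 := by simp [sq, mul_assoc]

-- Non-neighbours already contribute the truncation level `ε²`, which cannot increase.
theorem energy_le_add_sum_sum_nbhd (hε : 0 ≤ ε) (X' : ι → E) :
    energy ε X' ≤ energy ε X + ∑ i, ∑ j ∈ nbhd ε X i, (‖X' i - X' j‖ ^ 2 - ‖X i - X j‖ ^ 2) := by
  classical
  have hpair : ∀ i j, min (‖X' i - X' j‖ ^ 2) (ε ^ 2) ≤ min (‖X i - X j‖ ^ 2) (ε ^ 2)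
      + if j ∈ nbhd ε X i then ‖X' i - X' j‖ ^ 2 - ‖X i - X j‖ ^ 2 else 0 := by
    intro i j
    split_ifs with h
    · rw [min_eq_left (pow_le_pow_left₀ (norm_nonneg _) (mem_nbhd.1 h) 2)]
      linarith [min_le_left (‖X' i - X' j‖ ^ 2) (ε ^ 2)]
    · rw [min_eq_right (pow_le_pow_left₀ hε (not_le.1 (mt mem_nbhd.2 h)).le 2), add_zero]
      exact min_le_right _ _
  calc energy ε X' ≤ ∑ i, ∑ j, (min (‖X i - X j‖ ^ 2) (ε ^ 2)
        + if j ∈ nbhd ε X i then ‖X' i - X' j‖ ^ 2 - ‖X i - X j‖ ^ 2 else 0) :=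
        sum_le_sum fun i _ => sum_le_sum fun j _ => hpair i j
    _ = _ := by simp only [energy, sum_add_distrib, sum_ite_mem, univ_inter]

variable [InnerProductSpace ℝ E]

def localMean (ε : ℝ) (X : ι → E) (i : ι) : E :=
  (#(nbhd ε X i) : ℝ)⁻¹ • ∑ j ∈ nbhd ε X i, X j

def update (ε : ℝ) (α : ι → ℝ) (X : ι → E) (i : ι) : E :=
  α i • X i + ((1 - α i) / #(nbhd ε X i)) • ∑ j ∈ nbhd ε X i, X j

theorem sum_nbhd_sub_eq (hε : 0 ≤ ε) :
    ∑ j ∈ nbhd ε X i, (X i - X j) = (#(nbhd ε X i) : ℝ) • (X i - localMean ε X i) := by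
  have hcard : (#(nbhd ε X i) : ℝ) ≠ 0 := by
    exact_mod_cast (card_pos.mpr ⟨i, mem_nbhd_self hε⟩).ne'
  rw [sum_sub_distrib, sum_const, localMean, smul_sub, smul_inv_smul₀ hcard,
    Nat.cast_smul_eq_nsmul]

theorem update_sub {α : ι → ℝ} :
    update ε α X i - X i = (1 - α i) • (localMean ε X i - X i) := by
  rw [update, localMean, div_eq_mul_inv, mul_smul]
  module

theorem inner_sub_localMean_update_sub_le {α : ι → ℝ} (hα : α i ∈ Set.Icc (0 : ℝ) 1) :
    ⟪X i - localMean ε X i, update ε α X i - X i⟫ ≤ -‖update ε α X i - X i‖ ^ 2 := by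
  rw [update_sub, ← neg_sub, inner_neg_left, real_inner_smul_right, real_inner_self_eq_norm_sq,
    norm_smul, Real.norm_of_nonneg (sub_nonneg.2 hα.2), mul_pow]
  have : (1 - α i) ^ 2 ≤ 1 - α i := by nlinarith [hα.1, hα.2]
  nlinarith [sq_nonneg ‖localMean ε X i - X i‖]

theorem norm_add_sub_add_sq_sub (a b c d : E) :
    ‖(a + c) - (b + d)‖ ^ 2 - ‖a - b‖ ^ 2
      = (2 * ⟪a - b, c⟫ + 2 * ‖c‖ ^ 2) + (2 * ⟪b - a, d⟫ + 2 * ‖d‖ ^ 2) - ‖c + d‖ ^ 2 := by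
  rw [show a + c - (b + d) = (a - b) + (c - d) by abel, norm_add_sq_real, norm_sub_sq_real c d,
    norm_add_sq_real c d, inner_sub_right, ← neg_sub a b, inner_neg_left]
  ring

theorem sum_nbhd_inner_update_sub_le (hε : 0 ≤ ε) {α : ι → ℝ} (hα : α i ∈ Set.Icc (0 : ℝ) 1) :
    ∑ j ∈ nbhd ε X i, (2 * ⟪X i - X j, update ε α X i - X i⟫ + 2 * ‖update ε α X i - X i‖ ^ 2)
      ≤ 0 := by
  rw [sum_add_distrib, ← mul_sum, ← sum_inner, sum_nbhd_sub_eq hε, real_inner_smul_left,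
    sum_const, nsmul_eq_mul]
  have hinner := inner_sub_localMean_update_sub_le hα (ε := ε) (X := X)
  have hcard : (0 : ℝ) ≤ #(nbhd ε X i) := Nat.cast_nonneg _
  nlinarith

theorem sum_sum_nbhd_norm_update_sub_sq_le (hε : 0 ≤ ε) {α : ι → ℝ}
    (hα : ∀ i, α i ∈ Set.Icc (0 : ℝ) 1) :
    ∑ i, ∑ j ∈ nbhd ε X i, (‖update ε α X i - update ε α X j‖ ^ 2 - ‖X i - X j‖ ^ 2)
      ≤ -(4 * ∑ i, ‖update ε α X i - X i‖ ^ 2) := by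
  set Δ := fun i => update ε α X i - X i
  set h := fun i j => 2 * ⟪X i - X j, Δ i⟫ + 2 * ‖Δ i‖ ^ 2
  have hsplit : ∀ i j, ‖update ε α X i - update ε α X j‖ ^ 2 - ‖X i - X j‖ ^ 2
      = h i j + h j i - ‖Δ i + Δ j‖ ^ 2 := fun i j => by
    simpa [Δ] using norm_add_sub_add_sq_sub (X i) (X j) (Δ i) (Δ j)
  have hdiag : ∀ i, 4 * ‖Δ i‖ ^ 2 ≤ ∑ j ∈ nbhd ε X i, ‖Δ i + Δ j‖ ^ 2 := fun i => by
    calc 4 * ‖Δ i‖ ^ 2 = ‖Δ i + Δ i‖ ^ 2 := by rw [← two_smul ℝ, norm_smul]; norm_num; ring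
      _ ≤ _ := single_le_sum (f := fun j => ‖Δ i + Δ j‖ ^ 2) (fun _ _ => sq_nonneg _)
          (mem_nbhd_self hε)
  have hswap : ∑ i, ∑ j ∈ nbhd ε X i, h j i = ∑ i, ∑ j ∈ nbhd ε X i, h i j :=
    sum_sum_nbhd_comm _
  have hneg : ∑ i, ∑ j ∈ nbhd ε X i, h i j ≤ 0 :=
    sum_nonpos fun i _ => sum_nbhd_inner_update_sub_le hε (hα i)
  simp only [hsplit, sum_sub_distrib, sum_add_distrib]
  rw [mul_sum]
  linarith [sum_le_sum fun i (_ : i ∈ univ) => hdiag i]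

theorem energy_update_add_le (hε : 0 ≤ ε) {α : ι → ℝ} (hα : ∀ i, α i ∈ Set.Icc (0 : ℝ) 1) :
    energy ε (update ε α X) + 4 * ∑ i, ‖update ε α X i - X i‖ ^ 2 ≤ energy ε X := by
  linarith [energy_le_add_sum_sum_nbhd hε (X := X) (update ε α X),
    sum_sum_nbhd_norm_update_sub_sq_le hε hα (X := X)]

theorem four_mul_sum_range_sum_norm_sub_sq_le (hε : 0 ≤ ε) (x : ℕ → ι → E) (α : ℕ → ι → ℝ)
    (hα : ∀ t i, α t i ∈ Set.Icc (0 : ℝ) 1) (hx : ∀ t, x (t + 1) = update ε (α t) (x t))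
    (T : ℕ) :
    4 * ∑ t ∈ range T, ∑ i, ‖x (t + 1) i - x t i‖ ^ 2 ≤ Fintype.card ι ^ 2 * ε ^ 2 := by
  have hstep : ∀ t ∈ range T, 4 * ∑ i, ‖x (t + 1) i - x t i‖ ^ 2
      ≤ energy ε (x t) - energy ε (x (t + 1)) := fun t _ => by
    rw [hx]; linarith [energy_update_add_le hε (hα t) (X := x t)]
  rw [mul_sum]
  linarith [sum_le_sum hstep, sum_range_sub' (fun t => energy ε (x t)) T,
    energy_nonneg ε (x T), energy_le ε (x 0)]

theorem sum_nbhd_inner_sub_le (hε : 0 ≤ ε) {u : E} (hu : ‖u‖ ≤ 1) (i : ι) :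
    ∑ j ∈ nbhd ε X i, (⟪X i, u⟫ - ⟪X j, u⟫) ≤ Fintype.card ι * ‖X i - localMean ε X i‖ := by
  simp_rw [← inner_sub_left]
  rw [← sum_inner, sum_nbhd_sub_eq hε, real_inner_smul_left]
  have hinner : ⟪X i - localMean ε X i, u⟫ ≤ ‖X i - localMean ε X i‖ :=
    (real_inner_le_norm _ _).trans (mul_le_of_le_one_right (norm_nonneg _) hu)
  have hcard : (#(nbhd ε X i) : ℝ) ≤ Fintype.card ι := by exact_mod_cast card_le_univ _
  calc (#(nbhd ε X i) : ℝ) * ⟪X i - localMean ε X i, u⟫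
      ≤ #(nbhd ε X i) * ‖X i - localMean ε X i‖ := by gcongr
    _ ≤ Fintype.card ι * ‖X i - localMean ε X i‖ := by gcongr

theorem lt_card_sq_mul_sum_norm_sub_localMean (hε : 0 ≤ ε) {G : SimpleGraph ι}
    (hG : ∀ i j, G.Adj i j → ‖X i - X j‖ ≤ ε) {δ : ℝ} (hδ : 0 < δ) {i₀ j₀ : ι}
    (hreach : G.Reachable i₀ j₀) (hfar : δ < ‖X i₀ - X j₀‖) :
    δ < Fintype.card ι ^ 2 * ∑ i, ‖X i - localMean ε X i‖ := by
  set v := X i₀ - X j₀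
  have hv : v ≠ 0 := norm_pos_iff.1 (hδ.trans hfar)
  set u := ‖v‖⁻¹ • v
  have hproj : ⟪X j₀, u⟫ + δ < ⟪X i₀, u⟫ := by
    have : ⟪X i₀, u⟫ - ⟪X j₀, u⟫ = ‖v‖ := by
      rw [← inner_sub_left, real_inner_smul_right, real_inner_self_eq_norm_sq]
      field_simp
      rfl
    linarith
  obtain ⟨F, hF⟩ := exists_lt_sum_sum_sub_of_reachable (fun i j => mem_nbhd_comm)
    (fun i j h => mem_nbhd.2 (hG i j h)) (fun i => ⟪X i, u⟫) hδ hreach hproj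
  have hn : (0 : ℝ) < Fintype.card ι := by exact_mod_cast Fintype.card_pos_iff.2 ⟨i₀⟩
  have hsum : ∑ i ∈ F, ∑ j ∈ nbhd ε X i, (⟪X i, u⟫ - ⟪X j, u⟫)
      ≤ Fintype.card ι * ∑ i, ‖X i - localMean ε X i‖ := by
    rw [mul_sum]
    exact (sum_le_sum fun i _ => sum_nbhd_inner_sub_le hε (norm_smul_inv_norm hv).le i).trans
      (sum_le_sum_of_subset_of_nonneg (subset_univ F) fun _ _ _ => by positivity)
  rw [div_lt_iff₀ hn] at hF
  nlinarith

theorem two_mul_sq_div_lt_sum_norm_update_sub_sq (hε : 0 ≤ ε) {α : ι → ℝ} {γ : ℝ} (hγ : γ < 1)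
    (hαγ : ∀ i, α i ≤ γ) {G : SimpleGraph ι} (hG : ∀ i j, G.Adj i j → ‖X i - X j‖ ≤ ε)
    {δ : ℝ} (hδ : 0 < δ) {i₀ j₀ : ι} (hreach : G.Reachable i₀ j₀) (hfar : δ < ‖X i₀ - X j₀‖) :
    2 * δ ^ 2 * (1 - γ) ^ 2 / Fintype.card ι ^ 8 < ∑ i, ‖update ε α X i - X i‖ ^ 2 := by
  have hdev := lt_card_sq_mul_sum_norm_sub_localMean hε hG hδ hreach hfar
  have hne : i₀ ≠ j₀ := by rintro rfl; simp at hfar; linarith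
  have hn : (2 : ℝ) ≤ Fintype.card ι :=
    by exact_mod_cast Nat.succ_le_of_lt (Fintype.one_lt_card_iff.2 ⟨i₀, j₀, hne⟩)
  set n : ℝ := (Fintype.card ι : ℝ)
  have hdisp : (1 - γ) * ∑ i, ‖X i - localMean ε X i‖ ≤ ∑ i, ‖update ε α X i - X i‖ := by
    rw [mul_sum]
    refine sum_le_sum fun i _ => ?_
    rw [update_sub, norm_smul, norm_sub_rev]
    exact mul_le_mul_of_nonneg_right ((sub_le_sub_left (hαγ i) 1).trans (le_abs_self _))
      (norm_nonneg _)
  have hcs : (∑ i, ‖update ε α X i - X i‖) ^ 2 ≤ n * ∑ i, ‖update ε α X i - X i‖ ^ 2 := by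
    simpa using sq_sum_le_card_mul_sum_sq (s := univ) (f := fun i => ‖update ε α X i - X i‖)
  have hlin : (1 - γ) * δ < n ^ 2 * ∑ i, ‖update ε α X i - X i‖ := by
    nlinarith [sub_pos.2 hγ]
  have hquad : ((1 - γ) * δ) ^ 2 < n ^ 5 * ∑ i, ‖update ε α X i - X i‖ ^ 2 := by
    calc ((1 - γ) * δ) ^ 2 < (n ^ 2 * ∑ i, ‖update ε α X i - X i‖) ^ 2 :=
          pow_lt_pow_left₀ hlin (mul_nonneg (sub_pos.2 hγ).le hδ.le) two_ne_zero
      _ = n ^ 4 * (∑ i, ‖update ε α X i - X i‖) ^ 2 := by ring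
      _ ≤ n ^ 4 * (n * ∑ i, ‖update ε α X i - X i‖ ^ 2) := by gcongr
      _ = n ^ 5 * ∑ i, ‖update ε α X i - X i‖ ^ 2 := by ring
  rw [div_lt_iff₀ (by positivity)]
  nlinarith [sum_nonneg fun i (_ : i ∈ univ) => sq_nonneg ‖update ε α X i - X i‖,
    pow_le_pow_left₀ (by norm_num) hn 3]

end MixedHK

end

theorem mixedHK_tau_bound_general (n d : ℕ) (hn : 0 < n) (ε δ : ℝ) (hε : 0 < ε)
    (hδ0 : 0 < δ)
    (x : ℕ → Fin n → EuclideanSpace ℝ (Fin d))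
    (α : ℕ → Fin n → ℝ) (hα : ∀ t i, α t i ∈ Set.Icc (0 : ℝ) 1)
    (N : ℕ → Fin n → Finset (Fin n))
    (hN : ∀ t i, N t i = Finset.univ.filter (fun j => ‖x t i - x t j‖ ≤ ε))
    (hupd : ∀ t i, x (t + 1) i
      = α t i • x t i + ((1 - α t i) / ((N t i).card : ℝ)) • ∑ j ∈ N t i, x t j)
    (G : ℕ → SimpleGraph (Fin n))
    (hG : ∀ t i j, (G t).Adj i j ↔ i ≠ j ∧ ‖x t i - x t j‖ ≤ ε)
    (γ : ℝ) (hγ : γ < 1) (hγsup : ∀ t i, α t i ≤ γ)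
    (τ : ℕ)
    (hτ : τ = sInf {t : ℕ | ∀ i j, (G t).Reachable i j → ‖x t i - x t j‖ ≤ δ}) :
    (τ : ℝ) < (n : ℝ) ^ 10 * (ε / δ) ^ 2 / (8 * (1 - γ) ^ 2) := by
  have hγ₁ : 0 < 1 - γ := sub_pos.2 hγ
  rcases Nat.eq_zero_or_pos τ with rfl | hτ₀
  · rw [Nat.cast_zero]
    positivity
  have hx : ∀ t, x (t + 1) = MixedHK.update ε (α t) (x t) := fun t => funext fun i => by
    rw [hupd, hN]
    rfl
  have hbad : ∀ t ∈ Finset.range τ,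
      2 * δ ^ 2 * (1 - γ) ^ 2 / n ^ 8 < ∑ i, ‖x (t + 1) i - x t i‖ ^ 2 := by
    intro t ht
    have hnot := Nat.notMem_of_lt_sInf (hτ ▸ Finset.mem_range.1 ht)
    simp only [Set.mem_ofPred_eq, not_forall, not_le] at hnot
    obtain ⟨i, j, hij, hfar⟩ := hnot
    simpa [hx] using MixedHK.two_mul_sq_div_lt_sum_norm_update_sub_sq hε.le hγ (hγsup t)
      (fun i j h => ((hG t i j).1 h).2) hδ0 hij hfar
  have hsum := MixedHK.four_mul_sum_range_sum_norm_sub_sq_le hε.le x α hα hx τ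
  have hlt := Finset.sum_lt_sum_of_nonempty (Finset.nonempty_range_iff.2 hτ₀.ne') hbad
  simp only [Finset.sum_const, Finset.card_range, nsmul_eq_mul, Fintype.card_fin] at hlt hsum
  have hnR : (0 : ℝ) < n := by exact_mod_cast hn
  set c := 2 * δ ^ 2 * (1 - γ) ^ 2
  have hc : 0 < c := by positivity
  calc (τ : ℝ) = τ * (c / n ^ 8) * (n ^ 8 / c) := by field_simp
    _ < n ^ 2 * ε ^ 2 / 4 * (n ^ 8 / c) := by gcongr; linarith
    _ = n ^ 10 * (ε / δ) ^ 2 / (8 * (1 - γ) ^ 2) := by simp only [c]; field_simp; ring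

/-- Corollary 1 (bound on the time to δ-triviality): if
`sup_t max_i αᵢ(t) = γ < 1`, then the first time `τ` at which every component
of the profile graph is δ-trivial satisfies
`τ < n^10 (ε/δ)² / (8 (1-γ)²)`. -/
theorem mixedHK_tau_bound (n d : ℕ) (hn : 0 < n) (ε δ : ℝ) (hε : 0 < ε)
    (hδ0 : 0 < δ) (hδε : δ ≤ ε)
    (x : ℕ → Fin n → EuclideanSpace ℝ (Fin d))
    (α : ℕ → Fin n → ℝ) (hα : ∀ t i, α t i ∈ Set.Icc (0 : ℝ) 1)
    (N : ℕ → Fin n → Finset (Fin n))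
    (hN : ∀ t i, N t i = Finset.univ.filter (fun j => ‖x t i - x t j‖ ≤ ε))
    (hupd : ∀ t i, x (t + 1) i
      = α t i • x t i + ((1 - α t i) / ((N t i).card : ℝ)) • ∑ j ∈ N t i, x t j)
    (G : ℕ → SimpleGraph (Fin n))
    (hG : ∀ t i j, (G t).Adj i j ↔ i ≠ j ∧ ‖x t i - x t j‖ ≤ ε)
    (γ : ℝ) (hγ : γ < 1) (hγsup : ∀ t i, α t i ≤ γ)
    (τ : ℕ)
    (hτ : τ = sInf {t : ℕ | ∀ i j, (G t).Reachable i j → ‖x t i - x t j‖ ≤ δ}) :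
    (τ : ℝ) < (n : ℝ) ^ 10 * (ε / δ) ^ 2 / (8 * (1 - γ) ^ 2) :=
  mixedHK_tau_bound_general n d hn ε δ hε hδ0 x α hα N hN hupd G hG γ hγ hγsup τ hτ
end
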